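/- arXiv:2305.12645 — 16 statements merged into one kernel-verified Lean document; each statement's English description precedes it below -/
import Mathlib

section
/- For any x in GF(2^{4k}) and any α in GF(2^k), with q = 2^k and f(X) = X^{q²+q+1} + (X+1)^{q²+q+1}, we have f(x+α) = f(x) + α + α². -/
open Finset

theorem stmt0 (k : ℕ) (hk : 0 < k) (q : ℕ) (hq : q = 2^k) {F : Type*} [Field F] [Fintype F] [DecidableEq F] (hF : Fintype.card F = q^4)
    (x α : F) (hα : α^q = α) :
    ((x+α)^(q^2+q+1) + ((x+α)+1)^(q^2+q+1)) = (x^(q^2+q+1) + (x+1)^(q^2+q+1)) + α + α^2 := by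
  -- characteristic 2
  haveI : Fact (Nat.Prime 2) := ⟨Nat.prime_two⟩
  have hcard : Fintype.card F = 2 ^ (4 * k) := by
    rw [hF, hq, ← pow_mul, mul_comm]
  haveI hchar : CharP F 2 := by
    haveI hcp : CharP F (ringChar F) := ringChar.charP F
    have hp : (ringChar F).Prime :=
      CharP.char_prime_of_ne_zero F (CharP.ringChar_ne_zero_of_finite F)
    haveI : Fact (ringChar F).Prime := ⟨hp⟩
    obtain ⟨n, -, hcardp⟩ := FiniteField.card F (ringChar F)
    have hd : ringChar F ∣ 2 ^ (4 * k) := by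
      rw [← hcard, hcardp]
      exact dvd_pow_self _ n.ne_zero
    have : ringChar F = 2 :=
      (Nat.prime_dvd_prime_iff_eq hp Nat.prime_two).mp (hp.dvd_of_dvd_pow hd)
    rwa [this] at hcp
  have h2 : (2 : F) = 0 := by
    exact_mod_cast CharP.cast_eq_zero F 2
  -- Frobenius
  have frob : ∀ y z : F, (y + z) ^ q = y ^ q + z ^ q := by
    intro y z
    rw [hq]
    exact add_pow_char_pow y z 2 k
  have frob2 : ∀ y z : F, (y + z) ^ (q ^ 2) = y ^ (q ^ 2) + z ^ (q ^ 2) := by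
    intro y z
    rw [hq, ← pow_mul]
    exact add_pow_char_pow y z 2 (k*2)
  have hα2 : α ^ (q ^ 2) = α := by
    rw [pow_two, pow_mul, hα, hα]
  have one_pow_q : (1 : F) ^ q = 1 := one_pow q
  have expand : ∀ y : F, y ^ (q ^ 2 + q + 1) = y ^ (q ^ 2) * y ^ q * y := by
    intro y
    rw [pow_add, pow_add, pow_one]
  rw [expand, expand, expand, expand]
  rw [frob x α, frob2 x α, hα, hα2]
  have e1 : (x + α + 1) ^ q = x ^ q + α + 1 := by
    rw [frob, frob, hα, one_pow]
  have e2 : (x + α + 1) ^ (q ^ 2) = x ^ (q ^ 2) + α + 1 := by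
    rw [frob2, frob2, hα2, one_pow]
  have e3 : (x + 1) ^ q = x ^ q + 1 := by rw [frob, one_pow]
  have e4 : (x + 1) ^ (q ^ 2) = x ^ (q ^ 2) + 1 := by rw [frob2, one_pow]
  rw [e1, e2, e3, e4]
  set a := x ^ (q ^ 2)
  set b := x ^ q
  linear_combination (a*b*α + a*x*α + a*α^2 + b*x*α + b*α^2 + x*α^2 + α^3 + a*α + b*α + α^2 + x*α + α) * h2
end

section
/- For any x in GF(2^{4k}) and any β in GF(2^{2k}), with q = 2^k and f(X) = X^{q²+q+1} + (X+1)^{q²+q+1}, we have f(x+β) = f(x) + (β+β^q)(x+x^{q²}) + β² + β^q. -/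
open Finset

theorem stmt1 (k : ℕ) (hk : 0 < k) (q : ℕ) (hq : q = 2^k) {F : Type*} [Field F] [Fintype F] [DecidableEq F] (hF : Fintype.card F = q^4)
    (x β : F) (hβ : β^(q^2) = β) :
    ((x+β)^(q^2+q+1) + ((x+β)+1)^(q^2+q+1)) = (x^(q^2+q+1) + (x+1)^(q^2+q+1)) + (β+β^q)*(x+x^(q^2)) + β^2 + β^q := by
  subst hq
  -- characteristic 2
  set p := ringChar F with hp
  haveI : CharP F p := ringChar.charP F
  obtain ⟨n, hpprime, hcard⟩ := FiniteField.card F p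
  have hdvd : p ∣ 2 ^ (k * 4) := by
    rw [pow_mul, ← hF, hcard]
    exact dvd_pow_self p n.2.ne'
  have hp2 : p = 2 :=
    (Nat.prime_dvd_prime_iff_eq hpprime Nat.prime_two).mp (hpprime.dvd_of_dvd_pow hdvd)
  haveI h2 : CharP F 2 := hp2 ▸ (ringChar.charP F)
  haveI : Fact (Nat.Prime 2) := ⟨Nat.prime_two⟩
  have htwo : (2 : F) = 0 := by exact_mod_cast CharP.cast_eq_zero F 2
  have hfq : ∀ a b : F, (a + b) ^ (2^k) = a ^ (2^k) + b ^ (2^k) := fun a b =>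
    add_pow_char_pow a b 2 k
  have he : (2^k)^2 = 2^(k*2) := (pow_mul 2 k 2).symm
  have hfq2 : ∀ a b : F, (a + b) ^ ((2^k)^2) = a ^ ((2^k)^2) + b ^ ((2^k)^2) := fun a b => by
    rw [he]; exact add_pow_char_pow a b 2 (k*2)
  have hsplit : ∀ t : F, t ^ ((2^k)^2 + 2^k + 1) = t ^ ((2^k)^2) * t ^ (2^k) * t := fun t => by
    rw [pow_add, pow_add, pow_one]
  simp only [hsplit, hfq2, hfq, hβ, one_pow]
  set A := x ^ ((2^k)^2)
  set B := x ^ (2^k)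
  set G := β ^ (2^k)
  linear_combination (β + β*G + β^2*G + x*β*G + B*β + B*β^2 + B*x*β + A*β*G + A*x*G + A*B*β) * htwo
end

section
/- If x in GF(q⁴) satisfies x^{q²+q} + x^{q²+1} + x^{q+1} + x^{q²} + x^q + x + 1 = b for some b in GF(q⁴), then (x+x^q)^{q²+1} + (x+x^q) = b^q + b^{q²}. -/
/-!
Write `σ` for the Frobenius `x ↦ x ^ q`, a ring automorphism of order dividing 4 on
`GF(q⁴)`. Since `σ` is additive, `b ^ q` and `b ^ q²` are obtained from the defining
expression of `b` by cycling `(x, σ x, σ² x, σ³ x)` once and twice; their sum is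
`(σ² x + σ³ x) (x + σ x) + x + σ x` up to twice `(σ³ x + 1)(σ² x + 1)`, which vanishes in
characteristic 2.
-/

theorem frobenius_orbit_identity {R : Type*} [CommRing R] [CharP R 2] (σ : R →+* R) (x : R)
    (hσ : σ (σ (σ (σ x))) = x) :
    σ (σ (x + σ x)) * (x + σ x) + (x + σ x) =
      σ (σ (σ x) * σ x + σ (σ x) * x + σ x * x + σ (σ x) + σ x + x + 1) +
        σ (σ (σ (σ x) * σ x + σ (σ x) * x + σ x * x + σ (σ x) + σ x + x + 1)) := by
  simp only [map_add, map_mul, map_one, hσ]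
  linear_combination (-(σ (σ (σ x)) * σ (σ x) + σ (σ (σ x)) + σ (σ x) + 1)) *
    CharTwo.two_eq_zero (R := R)

theorem stmt3_general (k : ℕ) (q : ℕ) (hq : q = 2^k) {F : Type*} [Field F] [Fintype F] (hF : Fintype.card F = q^4) (x b : F)
    (h : x^(q^2+q) + x^(q^2+1) + x^(q+1) + x^(q^2) + x^q + x + 1 = b) :
    (x+x^q)^(q^2+1) + (x+x^q) = b^q + b^(q^2) := by
  subst hq
  have : CharP F 2 := charP_of_card_eq_prime_pow (hF.trans (pow_mul 2 k 4).symm)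
  set σ := iterateFrobenius F 2 k
  have hσ : ∀ y : F, y ^ 2 ^ k = σ y := fun y => (iterateFrobenius_def 2 k y).symm
  have hσ2 : ∀ y : F, y ^ (2 ^ k) ^ 2 = σ (σ y) := fun y => by rw [sq, pow_mul, hσ, hσ]
  have hσ4 : σ (σ (σ (σ x))) = x :=
    calc σ (σ (σ (σ x))) = x ^ Fintype.card F := by
          rw [hF]; simp only [← hσ, ← pow_mul]; ring_nf
      _ = x := FiniteField.pow_card x
  subst h
  simp only [pow_add, pow_one, hσ2, hσ]
  exact frobenius_orbit_identity σ x hσ4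

theorem stmt3 (k : ℕ) (hk : 0 < k) (q : ℕ) (hq : q = 2^k) {F : Type*} [Field F] [Fintype F] [DecidableEq F] (hF : Fintype.card F = q^4) (x b : F)
    (h : x^(q^2+q) + x^(q^2+1) + x^(q+1) + x^(q^2) + x^q + x + 1 = b) :
    (x+x^q)^(q^2+1) + (x+x^q) = b^q + b^(q^2) :=
  stmt3_general k q hq hF x b h
end

section
/- If x in GF(q⁴) satisfies f(x) = b, where f(X) = X^{q²+q+1} + (X+1)^{q²+q+1}, then Tr_{GF(q⁴)/GF(q)}(x) = Tr_{GF(q⁴)/GF(q)}(b). -/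
open Finset

theorem stmt4 (k : ℕ) (hk : 0 < k) (q : ℕ) (hq : q = 2^k) {F : Type*} [Field F] [Fintype F] [DecidableEq F] (hF : Fintype.card F = q^4) (x b : F) (h : (x^(q^2+q+1) + (x+1)^(q^2+q+1)) = b) :
    (x + x^q + x^(q^2) + x^(q^3)) = (b + b^q + b^(q^2) + b^(q^3)) := by
  -- characteristic 2
  obtain ⟨p, _inst⟩ := CharP.exists F
  have hp : p.Prime := CharP.char_is_prime F p
  obtain ⟨n, -, hc⟩ := FiniteField.card F p
  have hdvd : p ∣ 2 ^ (k * 4) := by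
    rw [hF, hq, ← pow_mul] at hc
    exact hc ▸ dvd_pow_self p n.2.ne'
  have hp2 : p = 2 :=
    (Nat.prime_dvd_prime_iff_eq hp Nat.prime_two).mp (hp.dvd_of_dvd_pow hdvd)
  subst hp2
  have h2 : (2 : F) = 0 := by exact_mod_cast CharP.cast_eq_zero F 2
  have hadd : ∀ a c : F, (a + c) ^ q = a ^ q + c ^ q := by
    intro a c
    have : Fact (Nat.Prime 2) := ⟨Nat.prime_two⟩
    rw [hq]; exact add_pow_char_pow a c 2 k
  have hx4 : ∀ a : F, (((a ^ q) ^ q) ^ q) ^ q = a := by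
    intro a
    have h1 : a ^ Fintype.card F = a := FiniteField.pow_card a
    rw [hF] at h1
    calc (((a ^ q) ^ q) ^ q) ^ q = a ^ (q * q * q * q) := by
          rw [pow_mul, pow_mul, pow_mul]
      _ = a ^ (q ^ 4) := by ring_nf
      _ = a := h1
  set A := x ^ q with hA
  set B := A ^ q with hB
  set C := B ^ q with hC
  have hC4 : C ^ q = x := hx4 x
  have hx2 : x ^ (q ^ 2) = B := by
    rw [pow_two, pow_mul]
  have hx3 : x ^ (q ^ 3) = C := by
    rw [show q ^ 3 = q * q * q by ring, pow_mul, pow_mul]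
  have hx1q : (x + 1) ^ q = A + 1 := by rw [hadd, one_pow]
  have hx1q2 : (x + 1) ^ (q ^ 2) = B + 1 := by
    rw [pow_two, pow_mul, hx1q, hadd, one_pow]
  have hb : b = B * A * x + (B + 1) * (A + 1) * (x + 1) := by
    rw [← h, pow_add, pow_add, pow_one, pow_add, pow_add, pow_one, hx2, hx1q2, hx1q]
  have hbq : b ^ q = C * B * A + (C + 1) * (B + 1) * (A + 1) := by
    rw [hb, hadd, mul_pow, mul_pow, mul_pow, mul_pow, hadd, hadd, hadd, one_pow]
  have hbq2 : b ^ (q ^ 2) = x * C * B + (x + 1) * (C + 1) * (B + 1) := by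
    rw [pow_two, pow_mul, hbq, hadd, mul_pow, mul_pow, mul_pow, mul_pow, hadd, hadd,
      hadd, one_pow, hC4]
  have hbq3 : b ^ (q ^ 3) = A * x * C + (A + 1) * (x + 1) * (C + 1) := by
    rw [show q ^ 3 = q ^ 2 * q by ring, pow_mul, hbq2, hadd, mul_pow, mul_pow, mul_pow,
      mul_pow, hadd, hadd, hadd, one_pow, hC4]
  rw [hx2, hx3, hbq, hbq2, hbq3, hb]
  linear_combination (-(x * A * B + A * B * C + B * C * x + C * x * A
    + x * A + x * B + x * C + A * B + A * C + B * C + x + A + B + C + 2)) * h2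
end

section
/- If x in GF(q⁴) satisfies f(x) = b where f(X) = X^{q²+q+1} + (X+1)^{q²+q+1}, and e := Tr_{GF(q⁴)/GF(q)}(b), then (x+x^q)² + (e+1)(x+x^q) + b^q + b^{q²} = 0. -/
open Finset

lemma aux_char2 {F : Type*} [Field F] (x0 x1 x2 x3 : F) (h2 : (2:F) = 0)
    (b0 b1 b2 b3 : F)
    (hb0 : b0 = x2*x1*x0 + (x2+1)*(x1+1)*(x0+1))
    (hb1 : b1 = x3*x2*x1 + (x3+1)*(x2+1)*(x1+1))
    (hb2 : b2 = x0*x3*x2 + (x0+1)*(x3+1)*(x2+1))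
    (hb3 : b3 = x1*x0*x3 + (x1+1)*(x0+1)*(x3+1)) :
    (x0+x1)^2 + ((b0+b1+b2+b3)+1)*(x0+x1) + b1 + b2 = 0 := by
  subst hb0 hb1 hb2 hb3
  linear_combination (2*x0^2 + 4*x0*x1 + 2*x1^2 + x0^2*x1*x2 + x0*x1^2*x2 + 2*x0*x1*x2 + x1^2*x2 + x0^2*x2 + 2*x0*x2 + 2*x1*x2 + x0^2*x1 + x0*x1^2 + 3*x0 + 3*x1 + 2*x0*x1*x2*x3 + x1^2*x2*x3 + 2*x0*x2*x3 + 2*x1*x2*x3 + 2*x0*x1*x3 + x1^2*x3 + 2*x0*x3 + 2*x1*x3 + x0^2*x2*x3 + x0^2*x3 + x0^2*x1*x3 + x0*x1^2*x3 + x2*x3 + x3 + x2 + 1) * h2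

theorem stmt5 (k : ℕ) (hk : 0 < k) (q : ℕ) (hq : q = 2^k) {F : Type*} [Field F] [Fintype F] [DecidableEq F] (hF : Fintype.card F = q^4) (x b : F) (h : (x^(q^2+q+1) + (x+1)^(q^2+q+1)) = b) :
    (x+x^q)^2 + ((b + b^q + b^(q^2) + b^(q^3))+1)*(x+x^q) + b^q + b^(q^2) = 0 := by
  -- the characteristic is 2
  haveI : CharP F (ringChar F) := ringChar.charP F
  have hp : (ringChar F).Prime := CharP.char_is_prime F (ringChar F)
  have hdvd : ringChar F ∣ Fintype.card F :=
    (CharP.cast_eq_zero_iff F (ringChar F) _).mp (FiniteField.cast_card_eq_zero F)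
  have hchar : ringChar F = 2 := by
    rw [hF, hq, ← pow_mul] at hdvd
    have := hp.dvd_of_dvd_pow hdvd
    exact (Nat.prime_dvd_prime_iff_eq hp Nat.prime_two).mp this
  haveI hc2 : CharP F 2 := hchar ▸ ringChar.charP F
  have h2 : (2 : F) = 0 := by
    have := CharP.cast_eq_zero F 2
    exact_mod_cast this
  -- Frobenius is additive
  have frob1 : ∀ a c : F, (a + c) ^ q = a ^ q + c ^ q := by
    intro a c
    haveI : Fact (Nat.Prime 2) := ⟨Nat.prime_two⟩
    rw [hq]
    exact add_pow_char_pow a c 2 k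
  -- iterated powers
  have e2 : ∀ a : F, a ^ q ^ 2 = (a ^ q) ^ q := fun a => by
    rw [← pow_mul, pow_two]
  have e3 : ∀ a : F, a ^ q ^ 3 = ((a ^ q) ^ q) ^ q := fun a => by
    rw [← pow_mul, ← pow_mul]; congr 1; ring
  have e4 : (((x ^ q) ^ q) ^ q) ^ q = x := by
    rw [← pow_mul, ← pow_mul, ← pow_mul]
    have : q * (q * (q * q)) = q ^ 4 := by ring
    rw [this, ← hF]
    exact FiniteField.pow_card x
  -- rewrite h
  simp only [pow_add, pow_one, e2, frob1, one_pow] at h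
  -- compute the conjugates of b
  have hbq : b ^ q = ((x^q)^q)^q * (x^q)^q * (x^q)
      + (((x^q)^q)^q + 1) * ((x^q)^q + 1) * ((x^q) + 1) := by
    rw [← h]
    simp only [frob1, mul_pow, one_pow]
  have hbq2 : (b ^ q) ^ q = x * ((x^q)^q)^q * ((x^q)^q)
      + (x + 1) * (((x^q)^q)^q + 1) * ((x^q)^q + 1) := by
    rw [hbq]
    simp only [frob1, mul_pow, one_pow, e4]
  have hbq3 : ((b ^ q) ^ q) ^ q = (x^q) * x * ((x^q)^q)^q
      + ((x^q) + 1) * (x + 1) * (((x^q)^q)^q + 1) := by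
    rw [hbq2]
    simp only [frob1, mul_pow, one_pow, e4]
  rw [e2 b, e3 b]
  exact aux_char2 x (x^q) ((x^q)^q) (((x^q)^q)^q) h2 b (b^q) ((b^q)^q) (((b^q)^q)^q)
    h.symm hbq hbq2 hbq3
end

section
/- Suppose b in GF(q⁴) satisfies Tr_{GF(q⁴)/GF(q)}(b) = 1. Then the equation X^{q²+q+1} + (X+1)^{q²+q+1} = b has either 0 or 2 solutions in GF(q⁴). -/
open Finset

private lemma traceX {F : Type*} [Field F] (h2 : (2:F) = 0) (x0 x1 x2 x3 b0 b1 b2 b3 : F)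
    (hb : b0 + b1 + b2 + b3 = 1)
    (E0 : x2*x1*x0 + (x2+1)*(x1+1)*(x0+1) = b0)
    (E1 : x3*x2*x1 + (x3+1)*(x2+1)*(x1+1) = b1)
    (E2 : x0*x3*x2 + (x0+1)*(x3+1)*(x2+1) = b2)
    (E3 : x1*x0*x3 + (x1+1)*(x0+1)*(x3+1) = b3) :
    x0 + x1 + x2 + x3 = 1 := by
  linear_combination E0 + E1 + E2 + E3 + hb +
    (-(2 + x3 + x2 + x2*x3 + x1 + x1*x3 + x1*x2 + x1*x2*x3 + x0 + x0*x3 + x0*x2 + x0*x2*x3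
      + x0*x1 + x0*x1*x3 + x0*x1*x2)) * h2

private lemma sqX {F : Type*} [Field F] (h2 : (2:F) = 0) (x0 x1 x2 x3 b0 b1 : F)
    (tx : x0 + x1 + x2 + x3 = 1)
    (E0 : x2*x1*x0 + (x2+1)*(x1+1)*(x0+1) = b0)
    (E1 : x3*x2*x1 + (x3+1)*(x2+1)*(x1+1) = b1) :
    b0 + b1 = (x0 + x3)^2 := by
  linear_combination (-1) * E0 - E1 + (2 + x3 + 2*x2 + 2*x2*x3 + x0 + 2*x0*x2) * tx +
    (2 - x3^2 + x2 - x2*x3^2 - x2^2 - x2^2*x3 - 2*x0*x3 - 2*x0*x2*x3 - x0*x2^2 - x0^2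
      - x0^2*x2) * h2

private lemma finalXY {F : Type*} [Field F] (h2 : (2:F) = 0) (x0 x1 x2 y0 y1 y2 b0 : F)
    (Ex0 : x2*x1*x0 + (x2+1)*(x1+1)*(x0+1) = b0)
    (Ey0 : y2*y1*y0 + (y2+1)*(y1+1)*(y0+1) = b0)
    (hd1 : x1 + y1 = x0 + y0)
    (hd2 : x2 + y2 = x0 + y0) :
    (x0 + y0) * ((x0 + y0) + 1) = 0 := by
  linear_combination Ex0 - Ey0 + (1 + y2 + y0 + 2*y0*y2) * hd1 +
    (1 + 2*y0 + 2*y0^2 - x1 - 2*x1*y0 + x0 + 2*x0*y0) * hd2 +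
    (2*y0 + 2*y0^2 + y0^3 - x2 - x2*y0 - x2*y0^2 - x1 - x1*y0 - x1*y0^2 + x1*x2*y0 + x0
      + 3*x0*y0 + 2*x0*y0^2 - x0*x2 - x0*x2*y0 - x0*x1 - x0*x1*y0 - x0*x1*x2 + x0^2
      + x0^2*y0) * h2

theorem stmt6 (k : ℕ) (hk : 0 < k) (q : ℕ) (hq : q = 2^k) {F : Type*} [Field F] [Fintype F] [DecidableEq F] (hF : Fintype.card F = q^4) (b : F) (hb : (b + b^q + b^(q^2) + b^(q^3)) = 1) :
    (Finset.univ.filter (fun x : F => (x^(q^2+q+1) + (x+1)^(q^2+q+1)) = b)).card = 0 ∨ (Finset.univ.filter (fun x : F => (x^(q^2+q+1) + (x+1)^(q^2+q+1)) = b)).card = 2 := by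
  -- characteristic 2
  have hcard : ((Fintype.card F : ℕ) : F) = 0 := FiniteField.cast_card_eq_zero F
  have h2 : (2 : F) = 0 := by
    rw [hF, hq] at hcard
    have : ((2:F))^(k*4) = 0 := by
      have : (((2^k)^4 : ℕ) : F) = ((2:F))^(k*4) := by push_cast; ring
      rw [← this]; exact hcard
    exact pow_eq_zero_iff (Nat.mul_ne_zero hk.ne' (by norm_num)) |>.mp this
  -- Frobenius additivity
  have hadd2 : ∀ a c : F, (a + c)^2 = a^2 + c^2 := by
    intro a c; linear_combination (a*c) * h2
  have haddp : ∀ n : ℕ, ∀ a c : F, (a + c)^(2^n) = a^(2^n) + c^(2^n) := by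
    intro n
    induction n with
    | zero => intro a c; simp
    | succ n ih =>
      intro a c
      rw [pow_succ, pow_mul, pow_mul, pow_mul, ih, hadd2]
  have hadd : ∀ a c : F, (a + c)^q = a^q + c^q := by
    intro a c; rw [hq]; exact haddp k a c
  -- x^(q^4) = x
  have hq4 : ∀ a : F, (((a^q)^q)^q)^q = a := by
    intro a
    have h := FiniteField.pow_card a
    rw [hF, show q^4 = ((q*q)*q)*q from by ring, pow_mul, pow_mul, pow_mul] at h
    exact h
  -- exponent splitting
  have hsplit : ∀ a : F, a^(q^2+q+1) = ((a^q)^q) * a^q * a := by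
    intro a
    rw [pow_add, pow_add, pow_one, show q^2 = q*q from by ring, pow_mul]
  -- trace hypothesis in nested form
  rw [show q^2 = q*q from by ring, show q^3 = (q*q)*q from by ring] at hb
  simp only [pow_mul] at hb
  -- hb : b + b^q + (b^q)^q + ((b^q)^q)^q = 1
  -- main step: any two solutions differ by 0 or 1
  have key : ∀ x y : F, (x^(q^2+q+1) + (x+1)^(q^2+q+1) = b) →
      (y^(q^2+q+1) + (y+1)^(q^2+q+1) = b) → y = x ∨ y = x + 1 := by
    intro x y hx hy
    -- E-equations for x
    rw [hsplit, hsplit] at hx hy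
    simp only [hadd, one_pow] at hx hy
    have Ex1 := congrArg (· ^ q) hx
    simp only [hadd, mul_pow, one_pow] at Ex1
    have Ex2 := congrArg (· ^ q) Ex1
    simp only [hadd, mul_pow, one_pow] at Ex2
    rw [hq4] at Ex2
    have Ex3 := congrArg (· ^ q) Ex2
    simp only [hadd, mul_pow, one_pow] at Ex3
    rw [hq4] at Ex3
    have Ey1 := congrArg (· ^ q) hy
    simp only [hadd, mul_pow, one_pow] at Ey1
    have Ey2 := congrArg (· ^ q) Ey1
    simp only [hadd, mul_pow, one_pow] at Ey2
    rw [hq4] at Ey2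
    have Ey3 := congrArg (· ^ q) Ey2
    simp only [hadd, mul_pow, one_pow] at Ey3
    rw [hq4] at Ey3
    -- traces
    have tx := traceX h2 x (x^q) ((x^q)^q) (((x^q)^q)^q) b (b^q) ((b^q)^q) (((b^q)^q)^q)
      hb hx Ex1 Ex2 Ex3
    have ty := traceX h2 y (y^q) ((y^q)^q) (((y^q)^q)^q) b (b^q) ((b^q)^q) (((b^q)^q)^q)
      hb hy Ey1 Ey2 Ey3
    have sx := sqX h2 x (x^q) ((x^q)^q) (((x^q)^q)^q) b (b^q) tx hx Ex1
    have sy := sqX h2 y (y^q) ((y^q)^q) (((y^q)^q)^q) b (b^q) ty hy Ey1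
    -- (u + v)^2 = 0
    have hsq : ((x + (((x^q)^q)^q)) + (y + (((y^q)^q)^q)))^2 = 0 := by
      linear_combination (-1) * sx - sy +
        ((x + (((x^q)^q)^q)) * (y + (((y^q)^q)^q)) + b + b^q) * h2
    have huv : (x + (((x^q)^q)^q)) + (y + (((y^q)^q)^q)) = 0 :=
      pow_eq_zero_iff (two_ne_zero) |>.mp hsq
    have h33 : (((x^q)^q)^q) + (((y^q)^q)^q) = x + y := by
      linear_combination huv - (x + y) * h2
    have hd1 : x^q + y^q = x + y := by
      have h := congrArg (· ^ q) h33
      simp only [hadd] at h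
      rw [hq4, hq4] at h
      exact h.symm
    have hd2 : (x^q)^q + (y^q)^q = x + y := by
      have h := congrArg (· ^ q) hd1
      simp only [hadd] at h
      rw [hd1] at h
      exact h
    have hfin := finalXY h2 x (x^q) ((x^q)^q) y (y^q) ((y^q)^q) b hx hy hd1 hd2
    rcases mul_eq_zero.mp hfin with h | h
    · left; linear_combination h - x * h2
    · right; linear_combination h - (x + 1) * h2
  by_cases hS : (Finset.univ.filter (fun x : F => (x^(q^2+q+1) + (x+1)^(q^2+q+1)) = b)) = ∅
  · left; rw [hS, Finset.card_empty]
  · right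
    obtain ⟨x, hxmem⟩ := Finset.nonempty_iff_ne_empty.mpr hS
    have hx : x^(q^2+q+1) + (x+1)^(q^2+q+1) = b := (Finset.mem_filter.mp hxmem).2
    have hx1 : (x+1)^(q^2+q+1) + ((x+1)+1)^(q^2+q+1) = b := by
      have hxx : (x+1)+1 = x := by linear_combination h2
      rw [hxx, add_comm]
      exact hx
    have hset : (Finset.univ.filter (fun x : F => (x^(q^2+q+1) + (x+1)^(q^2+q+1)) = b))
        = {x, x+1} := by
      ext z
      simp only [Finset.mem_filter, Finset.mem_univ, true_and, Finset.mem_insert,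
        Finset.mem_singleton]
      constructor
      · intro hz; exact key x z hx hz
      · rintro (rfl | rfl)
        · exact hx
        · exact hx1
    rw [hset]
    exact Finset.card_pair (by
      intro h
      exact one_ne_zero (left_eq_add.mp h))
end

section
/- Suppose b in GF(q⁴) satisfies Tr_{GF(q⁴)/GF(q)}(b) = 1 and Tr_{GF(q²)/GF(2)}(b^{q²+1}) = 1. Then the two solutions in GF(q⁴) of f(X) = b, where f(X) = X^{q²+q+1} + (X+1)^{q²+q+1}, are exactly x = b^{q/2} + α where α ranges over the two GF(q)-solutions of α² + α = f(b^{q/2}) + b. -/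
open Finset

theorem stmt8 (k : ℕ) (hk : 0 < k) (q : ℕ) (hq : q = 2^k) {F : Type*} [Field F] [Fintype F] [DecidableEq F] (hF : Fintype.card F = q^4) (b : F) (hb : (b + b^q + b^(q^2) + b^(q^3)) = 1)
    (hb2 : (∑ i ∈ Finset.range (2*k), (b^(q^2+1))^(2^i)) = 1) :
    ∀ x : F, (x^(q^2+q+1) + (x+1)^(q^2+q+1)) = b ↔
      ∃ α : F, α^q = α ∧ α^2 + α = ((b^(2^(k-1)))^(q^2+q+1) + ((b^(2^(k-1)))+1)^(q^2+q+1)) + b ∧ x = b^(2^(k-1)) + α := by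
  -- characteristic 2
  have two : (2:F) = 0 := by
    have h := FiniteField.cast_card_eq_zero F
    rw [hF, hq, ← pow_mul] at h
    have h' : ((2:F))^(k*4) = 0 := by exact_mod_cast h
    exact pow_eq_zero_iff (by omega) |>.mp h'
  have hchar : ringChar F = 2 := by
    have hd : ringChar F ∣ 2 := ringChar.dvd (by exact_mod_cast two)
    have h1 : ringChar F ≠ 1 := CharP.ringChar_ne_one
    rcases (Nat.dvd_prime Nat.prime_two).mp hd with h | h <;> omega
  haveI : CharP F 2 := ringChar.of_eq hchar
  haveI : Fact (Nat.Prime 2) := ⟨Nat.prime_two⟩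
  have hfrob : ∀ a c : F, (a+c)^q = a^q + c^q := by
    intro a c; rw [hq]; exact add_pow_char_pow ..
  have hone : (1:F)^q = 1 := one_pow q
  -- f in product form
  have fexp : ∀ w : F, w^(q^2+q+1) + (w+1)^(q^2+q+1)
      = (w^q)^q * w^q * w + ((w^q)^q+1)*(w^q+1)*(w+1) := by
    intro w
    have h1 : (w+1)^q = w^q + 1 := by rw [hfrob, hone]
    have h2 : (w+1)^(q^2) = (w^q)^q + 1 := by
      rw [pow_two, pow_mul, h1, hfrob, hone]
    have h3 : w^(q^2) = (w^q)^q := by rw [pow_two, pow_mul]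
    rw [pow_add, pow_add, pow_add, pow_add, pow_one, pow_one, h2, h1, h3]
  -- shift identity
  have P1 : ∀ z2 z1 z a : F,
      (z2+a)*(z1+a)*(z+a) + ((z2+a)+1)*((z1+a)+1)*((z+a)+1)
        = (z2*z1*z + (z2+1)*(z1+1)*(z+1)) + (a^2 + a) := by
    intro z2 z1 z a
    linear_combination (a + a^2 + a^3 + z*a + z*a^2 + z1*a + z1*a^2 + z1*z*a + z2*a + z2*a^2
      + z2*z*a + z2*z1*a) * two
  set y : F := b^(2^(k-1)) with hy
  have hy2 : y^2 = b^q := by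
    rw [hy, ← pow_mul, hq]
    congr 1
    rw [← pow_succ]
    congr 1
    omega
  intro x
  set u1 : F := x^q with hu1
  set u2 : F := u1^q with hu2
  set u3 : F := u2^q with hu3
  have hu0 : u3^q = x := by
    rw [hu3, hu2, hu1, ← pow_mul, ← pow_mul, ← pow_mul]
    rw [show q*(q*(q*q)) = q^4 from by ring, ← hF]
    exact FiniteField.pow_card x
  set yq : F := y^q with hyq
  have hyq2 : yq^2 = b^(q^2) := by
    rw [hyq, ← pow_mul, mul_comm q 2, pow_mul, hy2, ← pow_mul]
    congr 1
    ring
  constructor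
  · -- forward direction
    intro hfx
    have hfxG : u2*u1*x + (u2+1)*(u1+1)*(x+1) = b := by
      rw [← hfx, fexp x, ← hu1, ← hu2]
    have hbq : b^q = u3*u2*u1 + (u3+1)*(u2+1)*(u1+1) := by
      rw [← hfxG, hfrob, mul_pow, mul_pow, mul_pow, mul_pow, hfrob, hone, hfrob, hone, hfrob,
        hone, ← hu2, ← hu3]
    have hbq2 : b^(q^2) = x*u3*u2 + (x+1)*(u3+1)*(u2+1) := by
      rw [pow_two, pow_mul, hbq, hfrob, mul_pow, mul_pow, mul_pow, mul_pow,
        hfrob, hone, hfrob, hone, hfrob, hone, hu0, ← hu3]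
    have hbq3 : b^(q^3) = u1*x*u3 + (u1+1)*(x+1)*(u3+1) := by
      have h5 : q^3 = q^2*q := by ring
      rw [h5, pow_mul, hbq2, hfrob, mul_pow, mul_pow, mul_pow, mul_pow,
        hfrob, hone, hfrob, hone, hfrob, hone, hu0, ← hu1]
    have hsum : x + u1 + u2 + u3 = 1 := by
      linear_combination hb + hfxG - hbq - hbq2 - hbq3
        - (2 + u3 + u2 + u2*u3 + u1 + u1*u3 + u1*u2 + u1*u2*u3 + x + x*u3 + x*u2 + x*u2*u3
            + x*u1 + x*u1*u3 + x*u1*u2) * two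
    have hsq : (u1 + yq + (x+y))^2 = 0 := by
      linear_combination hy2 + hbq + hyq2 + hbq2 + (x+u1)*hsum
        + (1 + y*yq + u3 + u2 + u2*u3 + u1 + u1*yq + u1*y + u1*u2*u3 + x + x*yq + x*y
            + x*u2*u3) * two
    have h0 : u1 + yq + (x+y) = 0 := by
      exact pow_eq_zero_iff (two_ne_zero) |>.mp hsq
    have h0q : u2 + yq^q + (u1 + yq) = 0 := by
      have h6 : (u1 + yq + (x+y))^q = (0:F)^q := by rw [h0]
      rw [hfrob, hfrob, hfrob, ← hu2, ← hu1, ← hyq, zero_pow (by rw [hq]; positivity : q ≠ 0)] at h6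
      linear_combination h6
    refine ⟨x + y, ?_, ?_, ?_⟩
    · rw [hfrob, ← hu1, ← hyq]
      linear_combination h0 - (x+y)*two
    · rw [fexp y, ← hyq]
      linear_combination hfxG
        + (yq^q + y - u1 + 2*u1*(yq^q) + 2*u1*yq + 2*u1^2 + x) * h0
        + (-1 - u1 - x - 2*x*u1) * h0q
        + (-1 - yq*(yq^q) - y*(yq^q) - y*yq - y*yq*(yq^q) + u1*yq - u1*yq*(yq^q) - u1*yq^2
            - u1*y*(yq^q) - u1*y*yq + u1^2 - u1^2*(yq^q) - 2*u1^2*yq - u1^2*y - u1^3) * two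
    · linear_combination (-y)*two
  · rintro ⟨α, hαq, hα2, hx⟩
    rw [fexp y, ← hyq] at hα2
    rw [hx, fexp (y+α)]
    have h1 : (y+α)^q = yq + α := by rw [hfrob, hαq, ← hyq]
    have h2 : ((y+α)^q)^q = yq^q + α := by rw [h1, hfrob, hαq]
    rw [h2, h1, P1]
    linear_combination hα2 + (yq^q*yq*y + (yq^q+1)*(yq+1)*(y+1))*two
end

section
/- Suppose b in GF(q⁴) has Tr_{GF(q⁴)/GF(q)}(b) = 1. Then f(b^q) + b² = Tr_{GF(q²)/GF(q)}(b^{q²+1}) + Tr_{GF(q⁴)/GF(q²)}(b + b²), where f(X) = X^{q²+q+1} + (X+1)^{q²+q+1}. -/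
open Finset

theorem stmt9 (k : ℕ) (hk : 0 < k) (q : ℕ) (hq : q = 2^k) {F : Type*} [Field F] [Fintype F] [DecidableEq F] (hF : Fintype.card F = q^4) (b : F) (hb : (b + b^q + b^(q^2) + b^(q^3)) = 1) :
    ((b^q)^(q^2+q+1) + ((b^q)+1)^(q^2+q+1)) + b^2 = (b^(q^2+1) + (b^(q^2+1))^q) + ((b+b^2) + (b+b^2)^(q^2)) := by
  -- characteristic 2
  have hp : (ringChar F).Prime := CharP.char_is_prime F (ringChar F)
  haveI : Fact (ringChar F).Prime := ⟨hp⟩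
  obtain ⟨n, hn⟩ := FiniteField.card F (ringChar F)
  have hcard : Fintype.card F = 2 ^ (4 * k) := by
    rw [hF, hq, ← pow_mul, mul_comm]
  have hchar : ringChar F = 2 := by
    have hdvd : ringChar F ∣ 2 ^ (4 * k) := by
      rw [hcard] at hn
      exact hn.2 ▸ dvd_pow_self (ringChar F) n.pos.ne'
    exact (Nat.prime_dvd_prime_iff_eq hp Nat.prime_two).mp (hp.dvd_of_dvd_pow hdvd)
  haveI hC : CharP F 2 := hchar ▸ ringChar.charP F
  have htwo : (2 : F) = 0 := CharP.cast_eq_zero F 2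
  -- Frobenius additivity for q-th powers
  have frob : ∀ (m : ℕ) (x y : F), (x + y) ^ (q ^ m) = x ^ (q ^ m) + y ^ (q ^ m) := by
    intro m x y
    rw [hq, ← pow_mul, add_pow_char_pow]
  have frob1 : ∀ x y : F, (x + y) ^ q = x ^ q + y ^ q := by
    intro x y
    have := frob 1 x y
    simpa using this
  -- rewrite everything in terms of A, B, C
  have h1 : (b^q)^(q^2+q+1) = b^(q^3) * b^(q^2) * b^q := by
    rw [← pow_mul, ← pow_add, ← pow_add]
    ring_nf
  have h2 : ((b^q)+1)^(q^2+q+1) = (b^(q^3)+1) * (b^(q^2)+1) * (b^q+1) := by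
    have e1 : ((b^q)+1)^(q^2+q+1) = (((b^q)+1)^(q^2)) * (((b^q)+1)^q) * ((b^q)+1) := by
      rw [pow_succ, pow_add]
    rw [e1, frob 2, frob1, one_pow, one_pow, ← pow_mul, ← pow_mul]
    ring_nf
  have h3 : (b^(q^2+1))^q = b^(q^3) * b^q := by
    rw [pow_add, pow_one, mul_pow, ← pow_mul]
    ring_nf
  have h4 : b^(q^2+1) = b^(q^2) * b := by
    rw [pow_add, pow_one]
  have h5 : (b+b^2)^(q^2) = b^(q^2) + (b^(q^2))^2 := by
    rw [frob 2, ← pow_mul, ← pow_mul]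
    ring_nf
  rw [h1, h2, h3, h4, h5]
  set A := b^q with hA
  set B := b^(q^2) with hB
  set C := b^(q^3) with hC'
  linear_combination (B + 1) * hb + (C * B * A - B * b - B ^ 2 + 1 - b) * htwo
end

section
/- For any e in GF(q) with e ≠ 1 and any b in GF(q⁴) with Tr_{GF(q⁴)/GF(q)}(b) = e, the absolute trace over GF(2) of b^q/(e²+1) (an element of GF(q⁴)) equals 0; equivalently, there exists c in GF(q⁴) with c² + (e+1)c = b^q. -/
open Finset

section aux
variable {F : Type*} [Field F] [CharP F 2]

private lemma auxTadd (n : ℕ) (x y : F) :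
    ∑ i ∈ range n, (x + y)^(2^i) = ∑ i ∈ range n, x^(2^i) + ∑ i ∈ range n, y^(2^i) := by
  haveI : Fact (Nat.Prime 2) := ⟨Nat.prime_two⟩
  rw [← Finset.sum_add_distrib]
  exact Finset.sum_congr rfl fun i _ => by rw [add_pow_char_pow]

private lemma aux_sum4 (k : ℕ) (x : F) :
    ∑ i ∈ range (4*k), x^(2^i)
      = ∑ i ∈ range k, (x + x^(2^k) + (x^(2^k))^(2^k) + ((x^(2^k))^(2^k))^(2^k))^(2^i) := by
  have h4 : 4*k = k + k + k + k := by ring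
  rw [h4, Finset.sum_range_add, Finset.sum_range_add, Finset.sum_range_add]
  have h1 : ∀ (y:F) m n, (y^(2^m))^(2^n) = y^(2^(m+n)) := fun y m n => by
    rw [← pow_mul, ← pow_add]
  have e1 : ∀ i, x^(2^(k+i)) = (x^(2^k))^(2^i) := fun i => (h1 x k i).symm
  have e2 : ∀ i, x^(2^(k+k+i)) = ((x^(2^k))^(2^k))^(2^i) := fun i => by
    rw [h1, h1, show k+(k+i) = k+k+i from by ring]
  have e3 : ∀ i, x^(2^(k+k+k+i)) = (((x^(2^k))^(2^k))^(2^k))^(2^i) := fun i => by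
    rw [h1, h1, h1, show k+(k+(k+i)) = k+k+k+i from by ring]
  simp only [e1, e2, e3]
  rw [auxTadd, auxTadd, auxTadd]

private lemma aux_sq (n : ℕ) (x : F) (hx : x^(2^n) = x) :
    ∑ i ∈ range n, (x^2)^(2^i) = ∑ i ∈ range n, x^(2^i) := by
  have h : ∀ i, (x^2)^(2^i) = x^(2^(i+1)) := fun i => by
    rw [← pow_mul, ← pow_succ']
  simp only [h]
  have h1 := Finset.sum_range_succ' (fun i => x^(2^i)) n
  have h2 := Finset.sum_range_succ (fun i => x^(2^i)) n
  simp only [pow_zero, pow_one] at h1 h2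
  rw [hx] at h2
  linear_combination h2 - h1

end aux

theorem stmt10 (k : ℕ) (hk : 0 < k) (q : ℕ) (hq : q = 2^k) {F : Type*} [Field F] [Fintype F] [DecidableEq F] (hF : Fintype.card F = q^4) (e b : F) (he : e^q = e) (he1 : e ≠ 1)
    (hb : (b + b^q + b^(q^2) + b^(q^3)) = e) :
    (∑ i ∈ Finset.range (4*k), (b^q/(e^2+1))^(2^i)) = 0 ∧ ∃ c : F, c^2 + (e+1)*c = b^q := by
  subst hq
  -- characteristic 2
  have h2card : Fintype.card F = 2^(4*k) := by
    rw [hF, ← pow_mul, mul_comm]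
  haveI : CharP F (ringChar F) := ringChar.charP F
  obtain ⟨n0, hp, hcard⟩ := FiniteField.card F (ringChar F)
  have hchar2 : ringChar F = 2 := by
    have hdvd : ringChar F ∣ 2^(4*k) := by
      rw [← h2card, hcard]
      exact dvd_pow_self _ (by positivity)
    exact (Nat.prime_dvd_prime_iff_eq hp Nat.prime_two).mp (hp.dvd_of_dvd_pow hdvd)
  haveI hC2 : CharP F 2 := hchar2 ▸ ringChar.charP F
  haveI : Fact (Nat.Prime 2) := ⟨Nat.prime_two⟩
  have h20 : (2:F) = 0 := by exact_mod_cast CharP.cast_eq_zero F 2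
  have hne : (e + 1) ≠ 0 := by
    intro h
    exact he1 (by linear_combination h - h20)
  have hsq : e^2 + 1 = (e+1)^2 := by linear_combination -e * h20
  have hsqne : (e+1)^2 ≠ 0 := pow_ne_zero 2 hne
  have hpowcard : ∀ x : F, x^(2^(4*k)) = x := fun x => by
    rw [← h2card]; exact FiniteField.pow_card x
  set w : F := (e+1)⁻¹ with hw
  have hwe : w * (e+1) = 1 := inv_mul_cancel₀ hne
  have hE : (e+1)^(2^k) = e + 1 := by
    rw [add_pow_char_pow, he, one_pow]
  have hW : w^(2^k) = w := by rw [hw, inv_pow, hE]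
  have hW2 : (w^2)^(2^k) = w^2 := by rw [← pow_mul, mul_comm 2 (2^k), pow_mul, hW]
  set a : F := b^(2^k)/(e^2+1) with ha_def
  have ha2 : a = b^(2^k) * w^2 := by
    rw [ha_def, div_eq_mul_inv, hsq, hw, inv_pow]
  have hcomb : ∀ (y:F) m n, (y^(2^m))^(2^n) = y^(2^(m+n)) := fun y m n => by
    rw [← pow_mul, ← pow_add]
  have hbq4 : (((b^(2^k))^(2^k))^(2^k))^(2^k) = b := by
    rw [hcomb, hcomb, hcomb, show k+(k+(k+k)) = 4*k from by ring]
    exact hpowcard b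
  have hB2 : a^(2^k) = (b^(2^k))^(2^k) * w^2 := by rw [ha2, mul_pow, hW2]
  have hB3 : (a^(2^k))^(2^k) = ((b^(2^k))^(2^k))^(2^k) * w^2 := by rw [hB2, mul_pow, hW2]
  have hB4 : ((a^(2^k))^(2^k))^(2^k) = b * w^2 := by rw [hB3, mul_pow, hW2, hbq4]
  have eb2 : b^((2^k:ℕ)^2) = (b^(2^k))^(2^k) := by rw [hcomb]; congr 1; ring
  have eb3 : b^((2^k:ℕ)^3) = ((b^(2^k))^(2^k))^(2^k) := by
    rw [hcomb, hcomb]; congr 1; ring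
  have hbase : a + a^(2^k) + (a^(2^k))^(2^k) + ((a^(2^k))^(2^k))^(2^k) = e * w^2 := by
    rw [hB4, hB3, hB2, ha2]
    linear_combination w^2*hb - w^2*eb2 - w^2*eb3
  have hewsq : e * w^2 = w + w^2 := by
    linear_combination w * hwe - w^2 * h20
  have part1 : (∑ i ∈ Finset.range (4*k), a^(2^i)) = 0 := by
    rw [aux_sum4, hbase, hewsq]
    have hterm : ∀ i, (w + w^2)^(2^i) = w^(2^(i+1)) - w^(2^i) := fun i => by
      have h1 : (w + w^2)^(2^i) = w^(2^i) + (w^2)^(2^i) := by rw [add_pow_char_pow]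
      have h2 : (w^2)^(2^i) = w^(2^(i+1)) := by rw [← pow_mul, ← pow_succ']
      rw [h1, h2]; linear_combination w^(2^i) * h20
    simp only [hterm]
    rw [Finset.sum_range_sub (fun i => w^(2^i)), hW]
    simp
  refine ⟨part1, ?_⟩
  -- counting argument for existence
  classical
  set T : F → F := fun x => ∑ i ∈ range (4*k), x^(2^i) with hT
  set fAS : F → F := fun d => d^2 + d with hfAS
  have hTf : ∀ d, T (fAS d) = 0 := by
    intro d
    show (∑ i ∈ range (4*k), (d^2 + d)^(2^i)) = 0
    rw [auxTadd, aux_sq (4*k) d (hpowcard d)]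
    exact CharTwo.add_self_eq_zero _
  set K : Finset F := univ.filter (fun x : F => T x = 0) with hK
  set I : Finset F := univ.image fAS with hI
  have hIK : I ⊆ K := by
    intro y hy
    obtain ⟨d, -, rfl⟩ := Finset.mem_image.mp hy
    simp only [hK, mem_filter, mem_univ, true_and]
    exact hTf d
  -- the polynomial whose roots are ker T
  set P : Polynomial F := ∑ i ∈ range (4*k), Polynomial.X^(2^i) with hP
  have hPeval : ∀ x : F, P.eval x = T x := fun x => by
    simp [hP, hT, Polynomial.eval_finset_sum]
  have hPne : P ≠ 0 := by
    intro h
    have hc : P.coeff 1 = 1 := by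
      rw [hP, Polynomial.finset_sum_coeff]
      simp only [Polynomial.coeff_X_pow]
      rw [Finset.sum_eq_single 0]
      · simp
      · intro i hi hne0
        have : (2:ℕ)^i ≠ 1 := (Nat.one_lt_pow hne0 (by norm_num)).ne'
        exact if_neg (fun h => this h.symm)
      · intro h0
        exact absurd (Finset.mem_range.mpr (by omega)) h0
    rw [h] at hc
    simp at hc
  have hKcard : K.card ≤ 2^(4*k-1) := by
    have hsub : K ⊆ P.roots.toFinset := by
      intro x hx
      simp only [hK, mem_filter, mem_univ, true_and] at hx
      rw [Multiset.mem_toFinset, Polynomial.mem_roots hPne]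
      exact (hPeval x).trans hx
    have hdeg : P.natDegree ≤ 2^(4*k-1) := by
      apply Polynomial.natDegree_sum_le_of_forall_le
      intro i hi
      rw [Polynomial.natDegree_X_pow]
      exact Nat.pow_le_pow_right (by norm_num) (by simp only [Finset.mem_range] at hi; omega)
    calc K.card ≤ P.roots.toFinset.card := Finset.card_le_card hsub
      _ ≤ Multiset.card P.roots := Multiset.toFinset_card_le _
      _ ≤ P.natDegree := Polynomial.card_roots' P
      _ ≤ 2^(4*k-1) := hdeg
  have hfiber : ∀ y ∈ I, (univ.filter (fun d => fAS d = y)).card = 2 := by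
    intro y hy
    obtain ⟨d0, -, rfl⟩ := Finset.mem_image.mp hy
    have hset : univ.filter (fun d => fAS d = fAS d0) = {d0, d0+1} := by
      ext d
      simp only [mem_filter, mem_univ, true_and, mem_insert, mem_singleton]
      constructor
      · intro h
        have h' : d^2 + d = d0^2 + d0 := h
        have hfact : (d - d0) * (d + d0 + 1) = 0 := by linear_combination h'
        rcases mul_eq_zero.mp hfact with h1 | h1
        · exact Or.inl (sub_eq_zero.mp h1)
        · exact Or.inr (by linear_combination h1 - (d0+1)*h20)
      · rintro (rfl | rfl)
        · rfl
        · show (d0+1)^2 + (d0+1) = d0^2 + d0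
          linear_combination (d0+1)*h20
    rw [hset, Finset.card_insert_of_notMem, Finset.card_singleton]
    simp only [mem_singleton]
    intro hcontr
    have : (1:F) = 0 := by linear_combination hcontr + h20
    exact one_ne_zero this
  have hcount : Fintype.card F = 2 * I.card := by
    rw [← Finset.card_univ,
      Finset.card_eq_sum_card_fiberwise (fun d _ => Finset.mem_image_of_mem fAS (mem_univ d)),
      Finset.sum_congr rfl hfiber, Finset.sum_const, smul_eq_mul, mul_comm]
  have hIcard : I.card = 2^(4*k-1) := by
    have h1 : 2 * I.card = 2 * 2^(4*k-1) := by
      rw [← hcount, h2card, ← pow_succ']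
      congr 1; omega
    omega
  have hKI : I = K := Finset.eq_of_subset_of_card_le hIK (by rw [hIcard]; exact hKcard)
  have haK : a ∈ K := by
    simp only [hK, mem_filter, mem_univ, true_and]
    exact part1
  rw [← hKI] at haK
  obtain ⟨d, -, hd⟩ := Finset.mem_image.mp haK
  have hda : d^2 + d = a := hd
  have hmul : a * (e+1)^2 = b^(2^k) := by
    rw [ha_def, hsq, div_mul_cancel₀ _ hsqne]
  exact ⟨(e+1)*d, by linear_combination (e+1)^2 * hda + hmul⟩
end

section
/- Let b, c in GF(q⁴) satisfy c² + (e+1)c = b^q where e = Tr_{GF(q⁴)/GF(q)}(b). Then Tr_{GF(q⁴)/GF(q)}(c) ∈ {1, e}. -/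
open Finset

theorem stmt11 (k : ℕ) (hk : 0 < k) (q : ℕ) (hq : q = 2^k) {F : Type*} [Field F] [Fintype F] [DecidableEq F] (hF : Fintype.card F = q^4) (b c : F)
    (hc : c^2 + ((b + b^q + b^(q^2) + b^(q^3))+1)*c = b^q) :
    (c + c^q + c^(q^2) + c^(q^3)) = 1 ∨ (c + c^q + c^(q^2) + c^(q^3)) = (b + b^q + b^(q^2) + b^(q^3)) := by
  -- characteristic 2
  haveI : CharP F (ringChar F) := ringChar.charP F
  obtain ⟨n, hp, hcardp⟩ := FiniteField.card F (ringChar F)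
  have hdvd : ringChar F ∣ 2 ^ (4 * k) := by
    have h1 : ringChar F ∣ Fintype.card F := hcardp ▸ dvd_pow_self _ n.ne_zero
    rwa [hF, hq, ← pow_mul, mul_comm] at h1
  have hp2 : ringChar F = 2 :=
    (Nat.prime_dvd_prime_iff_eq hp Nat.prime_two).mp (hp.dvd_of_dvd_pow hdvd)
  haveI hchar : CharP F 2 := hp2 ▸ ringChar.charP F
  haveI : Fact (Nat.Prime 2) := ⟨Nat.prime_two⟩
  have h2 : (2 : F) = 0 := by
    have := CharP.cast_eq_zero F 2; exact_mod_cast this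
  -- Frobenius facts
  have hfq : ∀ x y : F, (x + y) ^ q = x ^ q + y ^ q := by
    intro x y; rw [hq]; exact add_pow_char_pow x y 2 k
  have hpow4 : ∀ x : F, (x ^ (q ^ 3)) ^ q = x := by
    intro x
    rw [← pow_mul, ← pow_succ]
    rw [← hF]; exact FiniteField.pow_card x
  have hq2 : ∀ x : F, (x ^ q) ^ q = x ^ (q ^ 2) := by
    intro x; rw [← pow_mul, ← pow_two]
  have hq3 : ∀ x : F, (x ^ (q ^ 2)) ^ q = x ^ (q ^ 3) := by
    intro x; rw [← pow_mul, ← pow_succ]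
  have hsq : ∀ x : F, (x ^ 2) ^ q = (x ^ q) ^ 2 := by
    intro x; rw [← pow_mul, mul_comm, pow_mul]
  have hmul : ∀ x y : F, (x * y) ^ q = x ^ q * y ^ q := fun x y => mul_pow x y q
  have hone : (1 : F) ^ q = 1 := one_pow q
  -- e is fixed by Frobenius
  have hefix : (b + b ^ q + b ^ (q ^ 2) + b ^ (q ^ 3)) ^ q
      = b + b ^ q + b ^ (q ^ 2) + b ^ (q ^ 3) := by
    rw [hfq, hfq, hfq, hq2, hq3, hpow4]; ring
  obtain ⟨e, he⟩ : ∃ e : F, e = b + b ^ q + b ^ (q ^ 2) + b ^ (q ^ 3) := ⟨_, rfl⟩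
  rw [← he] at hc hefix ⊢
  -- conjugate equations
  have E1 : (c ^ q) ^ 2 + (e + 1) * (c ^ q) = b ^ (q ^ 2) := by
    have := congrArg (· ^ q) hc
    simp only [hfq, hmul, hsq, hone, hefix, hq2] at this
    exact this
  have E2 : (c ^ (q ^ 2)) ^ 2 + (e + 1) * (c ^ (q ^ 2)) = b ^ (q ^ 3) := by
    have := congrArg (· ^ q) E1
    simp only [hfq, hmul, hsq, hone, hefix, hq2, hq3] at this
    exact this
  have E3 : (c ^ (q ^ 3)) ^ 2 + (e + 1) * (c ^ (q ^ 3)) = b := by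
    have := congrArg (· ^ q) E2
    simp only [hfq, hmul, hsq, hone, hefix, hq3, hpow4] at this
    exact this
  have key : (c + c ^ q + c ^ (q ^ 2) + c ^ (q ^ 3)) ^ 2
      + (e + 1) * (c + c ^ q + c ^ (q ^ 2) + c ^ (q ^ 3)) = e := by
    linear_combination hc + E1 + E2 + E3 - he +
      (c * c ^ q + c * c ^ (q ^ 2) + c * c ^ (q ^ 3) + c ^ q * c ^ (q ^ 2) +
        c ^ q * c ^ (q ^ 3) + c ^ (q ^ 2) * c ^ (q ^ 3)) * h2
  set t : F := c + c ^ q + c ^ (q ^ 2) + c ^ (q ^ 3) with ht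
  have hfac : (t + 1) * (t + e) = 0 := by linear_combination key + e * h2
  rcases mul_eq_zero.mp hfac with h | h
  · left; linear_combination h - h2
  · right; linear_combination h - e * h2
end

section
/- Let b, c in GF(q⁴) satisfy c² + (e+1)c = b^q where e = Tr_{GF(q⁴)/GF(q)}(b), and let f(X) = X^{q²+q+1} + (X+1)^{q²+q+1}. If f(c) + b lies in GF(q), then Tr_{GF(q⁴)/GF(q)}(c) = e. -/
open Finset

theorem stmt12 (k : ℕ) (hk : 0 < k) (q : ℕ) (hq : q = 2^k) {F : Type*} [Field F] [Fintype F] [DecidableEq F] (hF : Fintype.card F = q^4) (b c : F)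
    (hc : c^2 + ((b + b^q + b^(q^2) + b^(q^3))+1)*c = b^q)
    (h : ((c^(q^2+q+1) + (c+1)^(q^2+q+1)) + b)^q = (c^(q^2+q+1) + (c+1)^(q^2+q+1)) + b) :
    (c + c^q + c^(q^2) + c^(q^3)) = (b + b^q + b^(q^2) + b^(q^3)) := by
  subst hq
  -- characteristic 2
  haveI hC : CharP F (ringChar F) := ringChar.charP F
  obtain ⟨n, hp, hcard⟩ := FiniteField.card F (ringChar F)
  have hr2 : ringChar F = 2 := by
    have hdvd : ringChar F ∣ 2 := by
      have : ringChar F ∣ (2^k)^4 := by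
        rw [hF] at hcard
        exact hcard ▸ dvd_pow_self (ringChar F) n.pos.ne'
      exact hp.dvd_of_dvd_pow (by rwa [← pow_mul] at this)
    exact (Nat.prime_dvd_prime_iff_eq hp Nat.prime_two).mp hdvd
  haveI hchar : CharP F 2 := hr2 ▸ hC
  haveI : Fact (Nat.Prime 2) := ⟨Nat.prime_two⟩
  have h2 : (2 : F) = 0 := CharTwo.two_eq_zero
  -- the Frobenius x ↦ x^(2^k)
  set φ : F →+* F := iterateFrobenius F 2 k with hφdef
  have hφ : ∀ x : F, φ x = x ^ 2 ^ k := fun x => iterateFrobenius_def 2 k x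
  have E1 : ∀ x : F, x ^ 2 ^ k = φ x := fun x => (hφ x).symm
  have E2 : ∀ x : F, x ^ ((2:ℕ) ^ k) ^ 2 = φ (φ x) := by
    intro x; rw [sq, pow_mul, E1, E1]
  have E3 : ∀ x : F, x ^ ((2:ℕ) ^ k) ^ 3 = φ (φ (φ x)) := by
    intro x
    rw [show ((2:ℕ)^k)^3 = ((2:ℕ)^k)^2 * 2^k by ring, pow_mul, E1, E2]
  have E4 : ∀ x : F, φ (φ (φ (φ x))) = x := by
    intro x
    rw [hφ, hφ, hφ, hφ, ← pow_mul, ← pow_mul, ← pow_mul]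
    rw [show (2:ℕ)^k * (2^k * (2^k * 2^k)) = Fintype.card F by rw [hF, ← pow_mul]; ring]
    exact FiniteField.pow_card x
  have hsplit : ∀ x : F, x ^ (((2:ℕ)^k)^2 + 2^k + 1) = φ (φ x) * φ x * x := by
    intro x; rw [pow_add, pow_add, pow_one, E1, E2]
  simp only [hsplit, E1] at h
  have hB2 := congrArg φ (congrArg φ h)
  simp only [map_add, map_mul, map_one, E4] at h hB2
  rw [E1, E2, E3, E1, E2, E3]
  linear_combination h + hB2 +
    (-(φ (φ (φ b))) - φ b + φ (φ c) - φ c * φ (φ (φ c)) - φ c * φ (φ c) * φ (φ (φ c))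
      + c + c * φ (φ c) + c * φ (φ c) * φ (φ (φ c)) - c * φ c * φ (φ (φ c))
      + c * φ c * φ (φ c)) * h2
end

section
/- Let b, c in GF(q⁴) satisfy c² + (e+1)c = b^q where e = Tr_{GF(q⁴)/GF(q)}(b), and suppose Tr_{GF(q⁴)/GF(q)}(c) = e. Then, with f(X) = X^{q²+q+1} + (X+1)^{q²+q+1}, we have Tr_{GF(q)/GF(2)}(f(c)+b) = Tr_{GF(q)/GF(2)}((1+c+c^{q²})^{q+1}) + Tr_{GF(q²)/GF(2)}(c^{q²+1}). -/
/-!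
Write `cᵢ = c^(q^i)` and `e` for the common trace of `b` and `c`. Raising the defining equation
to the power `q³` gives `c₃² + (e + 1) c₃ = b`; substituting this for `b` and using
`c₀ + c₁ + c₂ + c₃ = e`, in characteristic 2 the element `f(c) + b = c₂c₁c₀ + (c₂+1)(c₁+1)(c₀+1) + b`
becomes `(1 + c₁ + c₃)(1 + c₀ + c₂) + c₂c₀ + (c₂c₀)^q`. The absolute trace is additive, and
`Tr_{GF(q²)/GF(2)}(z) = Tr_{GF(q)/GF(2)}(z + z^q)`.
-/

open Finset

theorem sum_range_pow_pow_add_range {R : Type*} [Semiring R] (a m n : ℕ) (z : R) :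
    ∑ i ∈ range (m + n), z ^ a ^ i
      = ∑ i ∈ range m, z ^ a ^ i + ∑ i ∈ range n, (z ^ a ^ m) ^ a ^ i := by
  simp only [sum_range_add, pow_add, pow_mul]

section CharP

variable {R : Type*} [CommRing R] {p : ℕ} [Fact p.Prime] [CharP R p]

theorem sum_range_add_pow_char_pow (n : ℕ) (x y : R) :
    ∑ i ∈ range n, (x + y) ^ p ^ i = ∑ i ∈ range n, x ^ p ^ i + ∑ i ∈ range n, y ^ p ^ i := by
  simp only [add_pow_char_pow, sum_add_distrib]

variable {k q : ℕ}

theorem add_pow_pow_of_eq_char_pow (hq : q = p ^ k) (m : ℕ) (x y : R) :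
    (x + y) ^ q ^ m = x ^ q ^ m + y ^ q ^ m := by
  rw [hq, ← pow_mul]
  exact add_pow_char_pow x y p (k * m)

def frobTrace (q : ℕ) (x : R) : R := x + x ^ q + x ^ q ^ 2 + x ^ q ^ 3

theorem sq_add_mul_pow_pow_three (hq : q = p ^ k) {b c : R} (hb : b ^ q ^ 4 = b)
    (hc : c ^ 2 + (frobTrace q b + 1) * c = b ^ q) :
    (c ^ q ^ 3) ^ 2 + (frobTrace q b + 1) * c ^ q ^ 3 = b := by
  have h := congrArg (· ^ q ^ 3) hc
  simp only [frobTrace, add_pow_pow_of_eq_char_pow hq, mul_pow, one_pow, ← pow_mul] at h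
  have hper : ∀ n, b ^ (q ^ 4 * n) = b ^ n := fun n => by rw [pow_mul, hb]
  rw [show q * q ^ 3 = q ^ 4 * 1 by ring, show q ^ 2 * q ^ 3 = q ^ 4 * q by ring,
    show q ^ 3 * q ^ 3 = q ^ 4 * q ^ 2 by ring, hper, hper, hper, pow_one, mul_comm 2, pow_mul] at h
  unfold frobTrace
  linear_combination h

end CharP

theorem prod_add_prod_add_one_eq_of_sq_add_mul_eq {R : Type*} [CommRing R] [CharP R 2]
    {c₀ c₁ c₂ c₃ b e : R} (hc₃ : c₃ ^ 2 + (e + 1) * c₃ = b) (he : c₀ + c₁ + c₂ + c₃ = e) :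
    c₂ * c₁ * c₀ + (c₂ + 1) * (c₁ + 1) * (c₀ + 1) + b
      = (1 + c₁ + c₃) * (1 + c₀ + c₂) + (c₂ * c₀ + c₃ * c₁) := by
  linear_combination (-1 : R) * hc₃ - c₃ * he + (c₂ * c₁ * c₀ + c₃ ^ 2) * CharTwo.two_eq_zero (R := R)

theorem stmt13_general (k : ℕ) (q : ℕ) (hq : q = 2^k) {F : Type*} [Field F] [Fintype F] (hF : Fintype.card F = q^4) (b c : F)
    (hc : c^2 + ((b + b^q + b^(q^2) + b^(q^3))+1)*c = b^q)
    (htc : (c + c^q + c^(q^2) + c^(q^3)) = (b + b^q + b^(q^2) + b^(q^3))) :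
    (∑ i ∈ Finset.range k, ((c^(q^2+q+1) + (c+1)^(q^2+q+1)) + b)^(2^i)) = (∑ i ∈ Finset.range k, ((1+c+c^(q^2))^(q+1))^(2^i)) + (∑ i ∈ Finset.range (2*k), (c^(q^2+1))^(2^i)) := by
  have : CharP F 2 := charP_of_card_eq_prime_pow (f := k * 4) (by rw [hF, hq, pow_mul])
  have hc₃ := sq_add_mul_pow_pow_three hq (by rw [← hF]; exact FiniteField.pow_card b) hc
  have hadd := add_pow_pow_of_eq_char_pow (R := F) hq
  have hadd₁ : ∀ x y : F, (x + y) ^ q = x ^ q + y ^ q := by simpa using hadd 1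
  have key : c ^ (q ^ 2 + q + 1) + (c + 1) ^ (q ^ 2 + q + 1) + b
      = (1 + c + c ^ q ^ 2) ^ (q + 1) + (c ^ (q ^ 2 + 1) + (c ^ (q ^ 2 + 1)) ^ q) := by
    have hq3 : (c ^ q ^ 2) ^ q = c ^ q ^ 3 := by rw [← pow_mul]; ring
    simp only [pow_add, pow_one, hadd, hadd₁, mul_pow, one_pow, hq3]
    exact prod_add_prod_add_one_eq_of_sq_add_mul_eq hc₃ htc
  rw [key, sum_range_add_pow_char_pow, sum_range_add_pow_char_pow, two_mul,
    sum_range_pow_pow_add_range, ← hq, add_assoc]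

theorem stmt13 (k : ℕ) (hk : 0 < k) (q : ℕ) (hq : q = 2^k) {F : Type*} [Field F] [Fintype F] [DecidableEq F] (hF : Fintype.card F = q^4) (b c : F)
    (hc : c^2 + ((b + b^q + b^(q^2) + b^(q^3))+1)*c = b^q)
    (htc : (c + c^q + c^(q^2) + c^(q^3)) = (b + b^q + b^(q^2) + b^(q^3))) :
    (∑ i ∈ Finset.range k, ((c^(q^2+q+1) + (c+1)^(q^2+q+1)) + b)^(2^i)) = (∑ i ∈ Finset.range k, ((1+c+c^(q^2))^(q+1))^(2^i)) + (∑ i ∈ Finset.range (2*k), (c^(q^2+1))^(2^i)) :=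
  stmt13_general k q hq hF b c hc htc
end

section
/- Let b, c in GF(q⁴) satisfy c² + (e+1)c = b^q with e = Tr_{GF(q⁴)/GF(q)}(b) and Tr_{GF(q⁴)/GF(q)}(c) = e, and let ω in GF(q²) satisfy ω + ω^q = 1. Then Tr_{GF(q)/GF(2)}(f(c+ω(e+1)) + b) = Tr_{GF(q²)/GF(2)}(c^{q²+1}) + 1, where f(X) = X^{q²+q+1} + (X+1)^{q²+q+1}. -/
open Finset

lemma keyA {R : Type*} [CommRing R] (h2 : (2:R) = 0) (c0 c1 c2 c3 w : R) :
    (c2+w*(c0+c1+c2+c3+1))*(c1+(1+w)*(c0+c1+c2+c3+1))*(c0+w*(c0+c1+c2+c3+1))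
    + (c2+w*(c0+c1+c2+c3+1)+1)*(c1+(1+w)*(c0+c1+c2+c3+1)+1)*(c0+w*(c0+c1+c2+c3+1)+1)
    + (c3^2+(c0+c1+c2+c3+1)*c3) + c2*c0 + c3*c1
    = c1^2+c3^2+c0+c2+((1+w)*(c0+c1+c2+c3+1))^2+w*(c0+c1+c2+c3+1)+1 := by
  linear_combination (w + 2*w^2 + w^3 + c3*w + 5*c3*w^2 + 3*c3*w^3 + 4*c3^2*w^2 + 3*c3^2*w^3 + c3^3*w^2 + c3^3*w^3 + 3*c2*w + 6*c2*w^2 + 3*c2*w^3 + 3*c2*c3*w + 10*c2*c3*w^2 + 6*c2*c3*w^3 + c2*c3^2*w + 4*c2*c3^2*w^2 + 3*c2*c3^2*w^3 + 3*c2^2*w + 6*c2^2*w^2 + 3*c2^2*w^3 + 2*c2^2*c3*w + 5*c2^2*c3*w^2 + 3*c2^2*c3*w^3 + c2^3*w + 2*c2^3*w^2 + c2^3*w^3 + 2*c1*w + 6*c1*w^2 + 3*c1*w^3 + c1*c3*w + 10*c1*c3*w^2 + 6*c1*c3*w^3 + 4*c1*c3^2*w^2 + 3*c1*c3^2*w^3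 + 5*c1*c2*w + 12*c1*c2*w^2 + 6*c1*c2*w^3 + 3*c1*c2*c3*w + 10*c1*c2*c3*w^2 + 6*c1*c2*c3*w^3 + 3*c1*c2^2*w + 6*c1*c2^2*w^2 + 3*c1*c2^2*w^3 - c1^2 + c1^2*w + 6*c1^2*w^2 + 3*c1^2*w^3 + 5*c1^2*c3*w^2 + 3*c1^2*c3*w^3 + 2*c1^2*c2*w + 6*c1^2*c2*w^2 + 3*c1^2*c2*w^3 + 2*c1^3*w^2 + c1^3*w^3 + 3*c0*w + 6*c0*w^2 + 3*c0*w^3 + 3*c0*c3*w + 10*c0*c3*w^2 + 6*c0*c3*w^3 + c0*c3^2*w + 4*c0*c3^2*w^2 + 3*c0*c3^2*w^3 + 2*c0*c2 + 7*c0*c2*w + 12*c0*c2*w^2 + 6*c0*c2*w^3 + c0*c2*c3 + 5*c0*c2*c3*w + 10*c0*c2*c3*w^2 + 6*c0*c2*c3*w^3 + c0*c2^2 + 4*c0*c2^2*w + 6*c0*c2^2*w^2 + 3*c0*c2^2*w^3 + 5*c0*c1*w + 12*c0*c1*w^2 + 6*c0*c1*w^3 + 3*c0*c1*c3*w + 10*c0*c1*c3*w^2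 + 6*c0*c1*c3*w^3 + 2*c0*c1*c2 + 7*c0*c1*c2*w + 12*c0*c1*c2*w^2 + 6*c0*c1*c2*w^3 + 2*c0*c1^2*w + 6*c0*c1^2*w^2 + 3*c0*c1^2*w^3 + 3*c0^2*w + 6*c0^2*w^2 + 3*c0^2*w^3 + 2*c0^2*c3*w + 5*c0^2*c3*w^2 + 3*c0^2*c3*w^3 + c0^2*c2 + 4*c0^2*c2*w + 6*c0^2*c2*w^2 + 3*c0^2*c2*w^3 + 3*c0^2*c1*w + 6*c0^2*c1*w^2 + 3*c0^2*c1*w^3 + c0^3*w + 2*c0^3*w^2 + c0^3*w^3) * h2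

theorem stmt14 (k : ℕ) (hk : 0 < k) (q : ℕ) (hq : q = 2^k) {F : Type*} [Field F] [Fintype F] [DecidableEq F] (hF : Fintype.card F = q^4) (b c ω : F)
    (hc : c^2 + ((b + b^q + b^(q^2) + b^(q^3))+1)*c = b^q)
    (htc : (c + c^q + c^(q^2) + c^(q^3)) = (b + b^q + b^(q^2) + b^(q^3)))
    (hω : ω^(q^2) = ω) (hω' : ω + ω^q = 1) :
    (∑ i ∈ Finset.range k, (((c+ω*((b + b^q + b^(q^2) + b^(q^3))+1))^(q^2+q+1) + ((c+ω*((b + b^q + b^(q^2) + b^(q^3))+1))+1)^(q^2+q+1)) + b)^(2^i)) = (∑ i ∈ Finset.range (2*k), (c^(q^2+1))^(2^i)) + 1 := by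
  -- characteristic 2
  haveI hchar2 : CharP F 2 := by
    obtain ⟨p, hpI⟩ := CharP.exists F
    haveI := hpI
    have hp : p.Prime := CharP.char_is_prime F p
    obtain ⟨n, -, hn⟩ := FiniteField.card F p
    have hdvd : p ∣ 2 ^ (k*4) := by
      rw [pow_mul, ← hq, ← hF, hn]
      exact dvd_pow_self p n.2.ne'
    have hp2 : p = 2 := by
      have := (Nat.Prime.dvd_of_dvd_pow hp hdvd)
      exact (Nat.prime_dvd_prime_iff_eq hp Nat.prime_two).mp this
    rwa [hp2] at hpI
  haveI : Fact (Nat.Prime 2) := ⟨Nat.prime_two⟩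
  have h2 : (2:F) = 0 := by
    have := CharP.cast_eq_zero F 2
    exact_mod_cast this
  -- Frobenius additivity
  have fq : ∀ x y : F, (x+y)^q = x^q + y^q := by
    intro x y; rw [hq]; exact add_pow_char_pow x y 2 k
  have fq2 : ∀ x y : F, (x+y)^(q^2) = x^(q^2) + y^(q^2) := by
    intro x y; rw [hq, ← pow_mul]; exact add_pow_char_pow x y 2 (k*2)
  have fq3 : ∀ x y : F, (x+y)^(q^3) = x^(q^3) + y^(q^3) := by
    intro x y; rw [hq, ← pow_mul]; exact add_pow_char_pow x y 2 (k*3)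
  -- power composition
  have pq : ∀ a : F, (a^q)^q = a^(q^2) := by
    intro a; rw [← pow_mul, pow_two]
  have pq2 : ∀ a : F, (a^(q^2))^q = a^(q^3) := by
    intro a; rw [← pow_mul, show q^2*q = q^3 from by ring]
  have pq3 : ∀ a : F, (a^(q^3))^q = a := by
    intro a; rw [← pow_mul, show q^3*q = q^4 from by ring, ← hF, FiniteField.pow_card]
  -- the trace e is fixed by Frobenius
  have he : (b + b^q + b^(q^2) + b^(q^3))^q = b + b^q + b^(q^2) + b^(q^3) := by
    rw [fq, fq, fq, pq, pq2, pq3]; ring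
  have hd : ((b + b^q + b^(q^2) + b^(q^3))+1)^q = (b + b^q + b^(q^2) + b^(q^3))+1 := by
    rw [fq, he, one_pow]
  have hωq : ω^q = 1 + ω := by linear_combination hω' - ω*h2
  -- x = c + ω(e+1) powers
  have hXq : (c+ω*((b + b^q + b^(q^2) + b^(q^3))+1))^q
      = c^q + (1+ω)*((b + b^q + b^(q^2) + b^(q^3))+1) := by
    rw [fq, mul_pow, hωq, hd]
  have hXq2 : (c+ω*((b + b^q + b^(q^2) + b^(q^3))+1))^(q^2)
      = c^(q^2) + ω*((b + b^q + b^(q^2) + b^(q^3))+1) := by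
    rw [← pq, hXq, fq, mul_pow, fq, one_pow, hωq, hd, pq]
    linear_combination ((b + b^q + b^(q^2) + b^(q^3))+1)*h2
  have hX1q : ((c+ω*((b + b^q + b^(q^2) + b^(q^3))+1))+1)^q
      = (c^q + (1+ω)*((b + b^q + b^(q^2) + b^(q^3))+1)) + 1 := by
    rw [fq, one_pow, hXq]
  have hX1q2 : ((c+ω*((b + b^q + b^(q^2) + b^(q^3))+1))+1)^(q^2)
      = (c^(q^2) + ω*((b + b^q + b^(q^2) + b^(q^3))+1)) + 1 := by
    rw [fq2, one_pow, hXq2]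
  -- conjugate of hc
  have key3 : ∀ a : F, a^q = a → a^(q^3) = a := by
    intro a ha
    rw [show q^3 = q*q*q from by ring, pow_mul, pow_mul, ha, ha, ha]
  have hc3 : (c^(q^3))^2 + ((b + b^q + b^(q^2) + b^(q^3))+1)*c^(q^3) = b := by
    have h1 : (c^2 + ((b + b^q + b^(q^2) + b^(q^3))+1)*c)^(q^3) = (b^q)^(q^3) := by rw [hc]
    have hb4 : (b^q)^(q^3) = b := by
      rw [← pow_mul, show q*q^3 = q^4 from by ring, ← hF, FiniteField.pow_card]
    rw [fq3, mul_pow, key3 _ hd, pow_right_comm, hb4] at h1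
    exact h1
  -- specialize keyA
  have main := keyA h2 c (c^q) (c^(q^2)) (c^(q^3)) ω
  rw [htc, hc3] at main
  -- decompose the (q^2+q+1)-th powers
  have hpow : ∀ a : F, a^(q^2+q+1) = a^(q^2) * a^q * a := by
    intro a; rw [pow_add, pow_add, pow_one]
  have hz : c^(q^2+1) = c^(q^2)*c := by rw [pow_add, pow_one]
  have hzq : (c^(q^2+1))^q = c^(q^3)*c^q := by rw [hz, mul_pow, pq2]
  -- the key pointwise identity
  have hYR : ((c+ω*((b + b^q + b^(q^2) + b^(q^3))+1))^(q^2+q+1)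
        + ((c+ω*((b + b^q + b^(q^2) + b^(q^3))+1))+1)^(q^2+q+1)) + b
      = ((c^q)^2+(c^(q^3))^2+c+c^(q^2)
          +((1+ω)*((b + b^q + b^(q^2) + b^(q^3))+1))^2+ω*((b + b^q + b^(q^2) + b^(q^3))+1)+1)
        + (c^(q^2+1) + (c^(q^2+1))^q) := by
    rw [hpow, hpow, hXq, hXq2, hX1q, hX1q2, hzq, hz]
    linear_combination main - (c^(q^2)*c + c^(q^3)*c^q)*h2
  -- trace-sum lemmas
  have Sadd : ∀ x y : F, (∑ i ∈ range k, (x+y)^(2^i))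
      = (∑ i ∈ range k, x^(2^i)) + ∑ i ∈ range k, y^(2^i) := by
    intro x y
    rw [← Finset.sum_add_distrib]
    exact Finset.sum_congr rfl fun i _ => add_pow_char_pow x y 2 i
  have Ssq : ∀ (n : ℕ) (x : F), (∑ i ∈ range n, (x^2)^(2^i))
      = (∑ i ∈ range n, x^(2^i)) + x^(2^n) + x := by
    intro n x
    induction n with
    | zero =>
      simp only [Finset.range_zero, Finset.sum_empty, pow_zero, pow_one]
      linear_combination (-x)*h2
    | succ n ih =>
      rw [Finset.sum_range_succ, Finset.sum_range_succ, ih, ← pow_mul,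
        show 2*2^n = 2^(n+1) from by ring]
      ring
  -- 2^k powers back to q
  have hc1q : (c^q)^(2^k) = c^(q^2) := by rw [← hq]; exact pq c
  have hc3q : (c^(q^3))^(2^k) = c := by rw [← hq]; exact pq3 c
  have hvq : (((1+ω)*((b + b^q + b^(q^2) + b^(q^3))+1)))^(2^k)
      = ω*((b + b^q + b^(q^2) + b^(q^3))+1) := by
    rw [← hq, mul_pow, fq, one_pow, hωq, hd]
    linear_combination ((b + b^q + b^(q^2) + b^(q^3))+1)*h2
  -- combination identities
  have huv : ω*((b + b^q + b^(q^2) + b^(q^3))+1) + (1+ω)*((b + b^q + b^(q^2) + b^(q^3))+1)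
      = (b + b^q + b^(q^2) + b^(q^3)) + 1 := by
    linear_combination (ω*((b + b^q + b^(q^2) + b^(q^3))+1))*h2
  have t1 : (∑ i ∈ range k, c^(2^i)) + (∑ i ∈ range k, (c^q)^(2^i))
        + (∑ i ∈ range k, (c^(q^2))^(2^i)) + (∑ i ∈ range k, (c^(q^3))^(2^i))
      = ∑ i ∈ range k, (b + b^q + b^(q^2) + b^(q^3))^(2^i) := by
    rw [← Sadd, ← Sadd, ← Sadd, htc]
  have t2 : (∑ i ∈ range k, (ω*((b + b^q + b^(q^2) + b^(q^3))+1))^(2^i))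
        + (∑ i ∈ range k, ((1+ω)*((b + b^q + b^(q^2) + b^(q^3))+1))^(2^i))
      = (∑ i ∈ range k, (b + b^q + b^(q^2) + b^(q^3))^(2^i)) + (∑ i ∈ range k, (1:F)^(2^i)) := by
    rw [← Sadd, ← Sadd, huv]
  -- the trace of R is 1
  have hSR : (∑ i ∈ range k, (((c^q)^2+(c^(q^3))^2+c+c^(q^2)
          +((1+ω)*((b + b^q + b^(q^2) + b^(q^3))+1))^2+ω*((b + b^q + b^(q^2) + b^(q^3))+1)+1))^(2^i))
      = 1 := by
    simp only [Sadd]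
    rw [Ssq, Ssq, Ssq, hc1q, hc3q, hvq]
    linear_combination t1 + t2 + htc + huv
      + ((∑ i ∈ range k, (b + b^q + b^(q^2) + b^(q^3))^(2^i)) + (∑ i ∈ range k, (1:F)^(2^i))
          + (b + b^q + b^(q^2) + b^(q^3))) * h2
  -- split the length-2k sum
  have hsplit : (∑ i ∈ range (2*k), (c^(q^2+1))^(2^i))
      = (∑ i ∈ range k, (c^(q^2+1))^(2^i)) + ∑ i ∈ range k, ((c^(q^2+1))^q)^(2^i) := by
    rw [two_mul, Finset.sum_range_add]
    congr 1
    refine Finset.sum_congr rfl fun i _ => ?_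
    rw [show (2:ℕ)^(k+i) = 2^k*2^i from pow_add 2 k i, pow_mul, hq]
  -- finish
  rw [hYR, Sadd, hSR, Sadd, hsplit]
  ring
end

section
/- The number of c in GF(q⁴) with Tr_{GF(q⁴)/GF(q)}(c) ≠ 1 and Tr_{GF(q)/GF(2)}((1+c+c^{q²})^{q+1}) = 0 equals (q⁴ - q³)/2. -/
/-!
Write `u = 1 + c + c^{q²}`. The map `c ↦ u` is `q²`-to-one from `𝔽_{q⁴}` onto `𝔽_{q²}`,
and `Tr_{q⁴/q}(c) = u + u^q`. If `u + u^q = 1` then `u^{q+1} = u² + u`, whose absolute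
trace is `u^q + u = 1`; so the trace condition on `c` is implied by the norm condition.
The norm `u ↦ u^{q+1}` maps `𝔽_{q²}^×` onto `𝔽_q^×` with fibres of size `q + 1`, and
exactly `q/2` elements of `𝔽_q` have absolute trace `0`. The count is therefore
`q² (1 + (q + 1)(q/2 - 1)) = (q⁴ - q³)/2`.

Every fibre size comes from the same squeeze: each fibre lies in the root set of a
polynomial of degree `m`, while the domain has `m` times as many elements as the target.
-/

open Finset Polynomial

namespace Finset

variable {α β : Type*} [DecidableEq β] {s : Finset α} {t : Finset β} {f : α → β} {m : ℕ}

theorem card_fiber_eq_of_card_eq_mul (hf : ∀ a ∈ s, f a ∈ t)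
    (hle : ∀ b ∈ t, #{a ∈ s | f a = b} ≤ m) (hs : #s = #t * m) {b : β} (hb : b ∈ t) :
    #{a ∈ s | f a = b} = m := by
  have hsum : ∑ b ∈ t, #{a ∈ s | f a = b} = ∑ _b ∈ t, m := by
    rw [← card_eq_sum_card_fiberwise hf, hs, sum_const, smul_eq_mul]
  exact (sum_eq_sum_iff_of_le hle).1 hsum b hb

theorem card_filter_comp_eq_mul (hf : ∀ a ∈ s, f a ∈ t)
    (hfib : ∀ b ∈ t, #{a ∈ s | f a = b} = m) (P : β → Prop) [DecidablePred P] :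
    #{a ∈ s | P (f a)} = #{b ∈ t | P b} * m := by
  have hmaps : ∀ a ∈ {a ∈ s | P (f a)}, f a ∈ {b ∈ t | P b} := by
    intro a ha
    rw [mem_filter] at ha ⊢
    exact ⟨hf a ha.1, ha.2⟩
  rw [card_eq_sum_card_fiberwise hmaps, ← smul_eq_mul, ← sum_const]
  refine sum_congr rfl fun b hb => ?_
  rw [mem_filter] at hb
  rw [filter_filter, ← hfib b hb.1]
  congr 1
  exact filter_congr fun a _ => ⟨And.right, fun h => ⟨h ▸ hb.2, h⟩⟩

end Finset

theorem card_filter_pow_add_eval_eq_le {R : Type*} [CommRing R] [IsDomain R] [DecidableEq R]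
    (s : Finset R) {n : ℕ} (hn : n ≠ 0) {p : R[X]} (hp : p.degree < n) (b : R) :
    #{x ∈ s | x ^ n + p.eval x = b} ≤ n := by
  have hlow : (p - C b).degree < n := (degree_sub_le _ _).trans_lt
    (max_lt hp (degree_C_le.trans_lt (by exact_mod_cast Nat.pos_of_ne_zero hn)))
  have hmonic : (X ^ n + (p - C b)).Monic := monic_X_pow_add hlow
  have hdeg : (X ^ n + (p - C b)).natDegree = n := by
    rw [natDegree_add_eq_left_of_degree_lt (by rwa [degree_X_pow]), natDegree_X_pow]
  refine (card_le_degree_of_subset_roots fun x hx => ?_).trans hdeg.le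
  rw [mem_val, mem_filter] at hx
  rw [mem_roots hmonic.ne_zero, IsRoot, eval_add, eval_sub, eval_pow, eval_X, eval_C,
    ← add_sub_assoc, hx.2, sub_self]

section FiniteField

variable {F : Type*} [Field F] [Fintype F]

theorem ne_zero_of_dvd_card_sub_one {d : ℕ} (hd : d ∣ Fintype.card F - 1) : d ≠ 0 := by
  rintro rfl
  have := Fintype.one_lt_card (α := F)
  rw [zero_dvd_iff] at hd
  omega

variable [DecidableEq F]

theorem card_pow_eq_one_of_dvd {d : ℕ} (hd : d ∣ Fintype.card F - 1) :
    #{x : F | x ^ d = 1} = d := by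
  have hd0 := ne_zero_of_dvd_card_sub_one hd
  obtain ⟨g, hg⟩ := IsCyclic.exists_ofOrder_eq_natCard (α := Fˣ)
  rw [Nat.card_units, Nat.card_eq_fintype_card] at hg
  obtain ⟨e, he⟩ := hd
  have he0 : e ≠ 0 := by rintro rfl; have := Fintype.one_lt_card (α := F); omega
  have hζ : IsPrimitiveRoot ((g ^ e : Fˣ) : F) d := by
    rw [IsPrimitiveRoot.coe_units_iff]
    convert IsPrimitiveRoot.orderOf (g ^ e)
    rw [orderOf_pow_of_dvd he0 (by rw [hg, he]; exact dvd_mul_left e d), hg, he,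
      Nat.mul_div_cancel _ (Nat.pos_of_ne_zero he0)]
  convert hζ.card_nthRootsFinset using 2
  ext x
  rw [mem_filter, Polynomial.mem_nthRootsFinset (Nat.pos_of_ne_zero hd0)]
  simp

-- For `Q` a power of the characteristic with `Q - 1 ∣ |F| - 1`, this is the subfield `𝔽_Q`.
variable (F) in
def powFixed (Q : ℕ) : Finset F := {x | x ^ Q = x}

@[simp]
theorem mem_powFixed {Q : ℕ} {x : F} : x ∈ powFixed F Q ↔ x ^ Q = x := by
  simp [powFixed]

theorem one_mem_powFixed (Q : ℕ) : (1 : F) ∈ powFixed F Q := by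
  simp

theorem zero_mem_powFixed {Q : ℕ} (hQ : Q ≠ 0) : (0 : F) ∈ powFixed F Q := by
  simp [hQ]

theorem card_powFixed {Q : ℕ} (hQ : Q - 1 ∣ Fintype.card F - 1) : #(powFixed F Q) = Q := by
  obtain ⟨d, rfl⟩ : ∃ d, Q = d + 1 :=
    ⟨Q - 1, by have := ne_zero_of_dvd_card_sub_one hQ; omega⟩
  rw [add_tsub_cancel_right] at hQ
  have hd := ne_zero_of_dvd_card_sub_one hQ
  have hsplit : powFixed F (d + 1) = insert 0 ({x | x ^ d = 1} : Finset F) := by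
    ext x
    rw [mem_powFixed, mem_insert, mem_filter_univ, pow_succ]
    by_cases hx : x = 0
    · simp [hx, hd]
    · rw [mul_eq_right₀ hx]
      simp [hx]
  rw [hsplit, card_insert_of_notMem (by simp [hd]), card_pow_eq_one_of_dvd hQ]

section Frobenius

variable {p e Q : ℕ} [Fact p.Prime] [CharP F p]

theorem add_mem_powFixed (hQ : Q = p ^ e) {a b : F} (ha : a ∈ powFixed F Q)
    (hb : b ∈ powFixed F Q) : a + b ∈ powFixed F Q := by
  subst hQ
  rw [mem_powFixed] at *
  rw [add_pow_char_pow, ha, hb]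

theorem add_pow_mem_powFixed (hQ : Q = p ^ e) (hF : Fintype.card F = Q ^ 2) (c : F) :
    c + c ^ Q ∈ powFixed F Q := by
  subst hQ
  rw [mem_powFixed, add_pow_char_pow, ← pow_mul, ← sq, ← hF, FiniteField.pow_card, add_comm]

theorem card_filter_add_pow_eq (hQ : Q = p ^ e) (hF : Fintype.card F = Q ^ 2) {b : F}
    (hb : b ∈ powFixed F Q) : #{c : F | c + c ^ Q = b} = Q := by
  have hdvd : Q - 1 ∣ Fintype.card F - 1 := by simpa [hF] using Nat.sub_dvd_pow_sub_pow Q 1 2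
  have hQ2 : 2 ≤ Q := by have := ne_zero_of_dvd_card_sub_one hdvd; omega
  refine card_fiber_eq_of_card_eq_mul (fun c _ => add_pow_mem_powFixed hQ hF c)
    (fun b _ => ?_) ?_ hb
  · simpa [add_comm] using card_filter_pow_add_eval_eq_le univ (p := X) (by omega)
      (by rw [degree_X]; exact_mod_cast hQ2) b
  · rw [card_univ, card_powFixed hdvd, hF, sq]

end Frobenius

theorem pow_succ_mem_erase_powFixed {Q : ℕ} {u : F} (hu : u ∈ (powFixed F (Q ^ 2)).erase 0) :
    u ^ (Q + 1) ∈ (powFixed F Q).erase 0 := by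
  rw [mem_erase, mem_powFixed] at hu ⊢
  refine ⟨pow_ne_zero _ hu.1, ?_⟩
  rw [← pow_mul, show (Q + 1) * Q = Q ^ 2 + Q by ring, pow_add, hu.2, pow_succ']

theorem card_filter_pow_succ_eq {Q : ℕ} (hQ : Q ^ 2 - 1 ∣ Fintype.card F - 1) {n : F}
    (hn : n ∈ (powFixed F Q).erase 0) :
    #{u ∈ (powFixed F (Q ^ 2)).erase 0 | u ^ (Q + 1) = n} = Q + 1 := by
  have hfac : Q ^ 2 - 1 = (Q + 1) * (Q - 1) := by simpa using Nat.sq_sub_sq Q 1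
  have hQ0 : Q ≠ 0 := by rintro rfl; exact ne_zero_of_dvd_card_sub_one hQ rfl
  have hdvd : Q - 1 ∣ Fintype.card F - 1 := (Dvd.intro_left _ hfac.symm).trans hQ
  refine card_fiber_eq_of_card_eq_mul (fun u => pow_succ_mem_erase_powFixed) (fun b _ => ?_) ?_ hn
  · simpa using card_filter_pow_add_eval_eq_le ((powFixed F (Q ^ 2)).erase 0) (p := 0)
      Q.succ_ne_zero (by simp) b
  · rw [card_erase_of_mem (zero_mem_powFixed (pow_ne_zero 2 hQ0)),
      card_erase_of_mem (zero_mem_powFixed hQ0), card_powFixed hdvd,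
      card_powFixed (by simpa using hQ), hfac, mul_comm]

theorem card_filter_comp_pow_succ {Q : ℕ} (hQ : Q ^ 2 - 1 ∣ Fintype.card F - 1)
    (P : F → Prop) [DecidablePred P] (hP : P 0) :
    #{u ∈ powFixed F (Q ^ 2) | P (u ^ (Q + 1))} =
      #{n ∈ (powFixed F Q).erase 0 | P n} * (Q + 1) + 1 := by
  have hQ0 : Q ≠ 0 := by rintro rfl; exact ne_zero_of_dvd_card_sub_one hQ rfl
  have h0 : (0 : F) ∈ {u ∈ powFixed F (Q ^ 2) | P (u ^ (Q + 1))} := by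
    rw [mem_filter, zero_pow Q.succ_ne_zero]
    exact ⟨zero_mem_powFixed (pow_ne_zero 2 hQ0), hP⟩
  rw [← card_erase_add_one h0, ← filter_erase]
  congr 1
  exact card_filter_comp_eq_mul (fun u => pow_succ_mem_erase_powFixed)
    (fun n hn => card_filter_pow_succ_eq hQ hn) P

end FiniteField

section AbsTrace

-- On `𝔽_{2^k}` this is the absolute trace `Tr_{𝔽_{2^k}/𝔽_2}`.
def absTrace {R : Type*} [CommSemiring R] (k : ℕ) (x : R) : R := ∑ i ∈ range k, x ^ 2 ^ i

@[simp]
theorem absTrace_zero {R : Type*} [CommSemiring R] (k : ℕ) : absTrace k (0 : R) = 0 := by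
  simp [absTrace]

theorem card_filter_absTrace_eq_le {R : Type*} [CommRing R] [IsDomain R] [DecidableEq R]
    (s : Finset R) {k : ℕ} (hk : k ≠ 0) (b : R) :
    #{x ∈ s | absTrace k x = b} ≤ 2 ^ (k - 1) := by
  obtain ⟨j, rfl⟩ := Nat.exists_eq_add_one_of_ne_zero hk
  have hdeg : (∑ i ∈ range j, (X : R[X]) ^ 2 ^ i).degree < ↑(2 ^ j) := by
    refine (degree_sum_le _ _).trans_lt
      ((Finset.sup_lt_iff (WithBot.bot_lt_coe _)).2 fun i hi => ?_)
    rw [degree_X_pow]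
    exact_mod_cast Nat.pow_lt_pow_right one_lt_two (mem_range.1 hi)
  simpa [absTrace, sum_range_succ, eval_finsetSum, add_comm] using
    card_filter_pow_add_eval_eq_le s (pow_ne_zero j two_ne_zero) hdeg b

variable {R : Type*} [CommRing R] [CharP R 2]

theorem absTrace_sq_add_self (k : ℕ) (x : R) : absTrace k (x ^ 2 + x) = x ^ 2 ^ k + x := by
  have hterm : ∀ i, (x ^ 2 + x) ^ 2 ^ i = x ^ 2 ^ (i + 1) - x ^ 2 ^ i := by
    intro i
    rw [add_pow_char_pow, CharTwo.sub_eq_add, ← pow_mul, ← pow_succ']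
  simp only [absTrace, hterm]
  rw [sum_range_sub (fun i => x ^ 2 ^ i), pow_zero, pow_one, CharTwo.sub_eq_add]

theorem absTrace_sq_add_absTrace (k : ℕ) (x : R) :
    absTrace k x ^ 2 + absTrace k x = x ^ 2 ^ k + x := by
  rw [← absTrace_sq_add_self, absTrace, absTrace, sum_pow_char, ← sum_add_distrib]
  refine sum_congr rfl fun i _ => ?_
  rw [add_pow_char_pow, pow_right_comm]

theorem absTrace_pow_succ_ne_zero [Nontrivial R] {k : ℕ} {u : R} (hu : u + u ^ 2 ^ k = 1) :
    absTrace k (u ^ (2 ^ k + 1)) ≠ 0 := by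
  have hfrob : u ^ 2 ^ k = 1 + u := CharTwo.add_eq_iff_eq_add.1 ((add_comm _ _).trans hu)
  rw [pow_succ, hfrob, add_mul, one_mul, ← sq, add_comm u, absTrace_sq_add_self, add_comm, hu]
  exact one_ne_zero

theorem absTrace_eq_zero_or_eq_one [IsDomain R] {k : ℕ} {x : R} (hx : x ^ 2 ^ k = x) :
    absTrace k x = 0 ∨ absTrace k x = 1 := by
  have h := absTrace_sq_add_absTrace k x
  rwa [hx, CharTwo.add_self_eq_zero, sq, ← mul_add_one, mul_eq_zero, CharTwo.add_eq_zero] at h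

theorem add_pow_add_pow_sq_add_pow_cube {Q e : ℕ} (hQ : Q = 2 ^ e) (c : R) :
    c + c ^ Q + c ^ Q ^ 2 + c ^ Q ^ 3 = (1 + c + c ^ Q ^ 2) + (1 + c + c ^ Q ^ 2) ^ Q := by
  have hfrob : ∀ x y : R, (x + y) ^ Q = x ^ Q + y ^ Q :=
    hQ ▸ fun x y => add_pow_char_pow x y 2 e
  rw [hfrob, hfrob, one_pow, ← pow_mul, ← pow_succ]
  linear_combination (-1 : R) * (CharTwo.two_eq_zero : (2 : R) = 0)

end AbsTrace

section CharTwo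

variable {F : Type*} [Field F] [Fintype F] [DecidableEq F] [CharP F 2]

theorem card_filter_comp_one_add_add_pow {Q e : ℕ} (hQ : Q = 2 ^ e)
    (hF : Fintype.card F = Q ^ 2) (P : F → Prop) [DecidablePred P] :
    #{c : F | P (1 + c + c ^ Q)} = #{u ∈ powFixed F Q | P u} * Q := by
  refine card_filter_comp_eq_mul (fun c _ => ?_) (fun b hb => ?_) P
  · rw [add_assoc]
    exact add_mem_powFixed hQ (one_mem_powFixed Q) (add_pow_mem_powFixed hQ hF c)
  · refine (congrArg card <| filter_congr fun c _ => ?_).trans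
      (card_filter_add_pow_eq hQ hF (add_mem_powFixed hQ (one_mem_powFixed Q) hb))
    rw [add_assoc, add_comm 1, CharTwo.add_eq_iff_eq_add, add_comm b]

theorem card_filter_absTrace_eq_zero {k : ℕ} (hk : k ≠ 0)
    (hF : 2 ^ k - 1 ∣ Fintype.card F - 1) :
    #{x ∈ powFixed F (2 ^ k) | absTrace k x = 0} = 2 ^ (k - 1) := by
  refine card_fiber_eq_of_card_eq_mul (t := {0, 1}) (fun x hx => ?_)
    (fun b _ => card_filter_absTrace_eq_le _ hk b) ?_ (mem_insert_self 0 {1})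
  · simpa using absTrace_eq_zero_or_eq_one (mem_powFixed.1 hx)
  · rw [card_powFixed hF, card_pair zero_ne_one, ← pow_succ',
      Nat.sub_add_cancel (Nat.pos_of_ne_zero hk)]

theorem card_filter_absTrace_pow_succ_eq_zero {k : ℕ} (hk : k ≠ 0)
    (hF : (2 ^ k) ^ 2 - 1 ∣ Fintype.card F - 1) :
    #{u ∈ powFixed F ((2 ^ k) ^ 2) | absTrace k (u ^ (2 ^ k + 1)) = 0} =
      (2 ^ (k - 1) - 1) * (2 ^ k + 1) + 1 := by
  have hF1 : 2 ^ k - 1 ∣ Fintype.card F - 1 :=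
    (show 2 ^ k - 1 ∣ (2 ^ k) ^ 2 - 1 by simpa using Nat.sub_dvd_pow_sub_pow (2 ^ k) 1 2).trans hF
  rw [card_filter_comp_pow_succ hF (fun n => absTrace k n = 0) (absTrace_zero k), filter_erase,
    card_erase_of_mem (by simp), card_filter_absTrace_eq_zero hk hF1]

end CharTwo

theorem pow_four_sub_pow_three_div_two {k : ℕ} (hk : k ≠ 0) :
    ((2 ^ k) ^ 4 - (2 ^ k) ^ 3) / 2 = ((2 ^ (k - 1) - 1) * (2 ^ k + 1) + 1) * (2 ^ k) ^ 2 := by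
  obtain ⟨j, rfl⟩ := Nat.exists_eq_add_one_of_ne_zero hk
  obtain ⟨t, ht⟩ := Nat.exists_eq_add_one_of_ne_zero (pow_ne_zero j two_ne_zero)
  have hq : 2 ^ (j + 1) = (t + 1) * 2 := by rw [pow_succ, ht]
  rw [Nat.add_sub_cancel, ht, Nat.add_sub_cancel, hq]
  have h : ((t + 1) * 2) ^ 4 = ((t + 1) * 2) ^ 3 +
      2 * ((t * ((t + 1) * 2 + 1) + 1) * ((t + 1) * 2) ^ 2) := by ring
  rw [h, Nat.add_sub_cancel_left, Nat.mul_div_cancel_left _ two_pos]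

theorem stmt16 (k : ℕ) (hk : 0 < k) (q : ℕ) (hq : q = 2^k) {F : Type*} [Field F] [Fintype F] [DecidableEq F] (hF : Fintype.card F = q^4) :
    (Finset.univ.filter (fun c : F => (c + c^q + c^(q^2) + c^(q^3)) ≠ 1 ∧ (∑ i ∈ Finset.range k, ((1+c+c^(q^2))^(q+1))^(2^i)) = 0)).card = (q^4 - q^3) / 2 := by
  subst hq
  have : CharP F 2 := charP_of_card_eq_prime_pow (f := k * 4) (by rw [hF, pow_mul])
  have hF2 : Fintype.card F = ((2 ^ k) ^ 2) ^ 2 := by rw [hF]; ring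
  have hdvd : (2 ^ k) ^ 2 - 1 ∣ Fintype.card F - 1 := by
    simpa [hF2] using Nat.sub_dvd_pow_sub_pow ((2 ^ k) ^ 2) 1 2
  calc _ = #{c : F | (1 + c + c ^ (2 ^ k) ^ 2) + (1 + c + c ^ (2 ^ k) ^ 2) ^ 2 ^ k ≠ 1 ∧
          absTrace k ((1 + c + c ^ (2 ^ k) ^ 2) ^ (2 ^ k + 1)) = 0} := by
        simp only [add_pow_add_pow_sq_add_pow_cube rfl]; rfl
    _ = #{u ∈ powFixed F ((2 ^ k) ^ 2) | u + u ^ 2 ^ k ≠ 1 ∧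
          absTrace k (u ^ (2 ^ k + 1)) = 0} * (2 ^ k) ^ 2 :=
        card_filter_comp_one_add_add_pow (pow_mul 2 k 2).symm hF2
          (fun u => u + u ^ 2 ^ k ≠ 1 ∧ absTrace k (u ^ (2 ^ k + 1)) = 0)
    _ = #{u ∈ powFixed F ((2 ^ k) ^ 2) | absTrace k (u ^ (2 ^ k + 1)) = 0} * (2 ^ k) ^ 2 := by
        congr 2
        exact filter_congr fun u _ =>
          and_iff_right_of_imp fun h htr => absTrace_pow_succ_ne_zero htr h
    _ = _ := by
        rw [card_filter_absTrace_pow_succ_eq_zero hk.ne' hdvd,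
          pow_four_sub_pow_three_div_two hk.ne']
end

section
/- If Tr_{GF(q⁴)/GF(q)}(c) = 1 for c in GF(q⁴), then Tr_{GF(q)/GF(2)}((1+c+c^{q²})^{q+1}) = 1. -/
open Finset

theorem stmt17 (k : ℕ) (hk : 0 < k) (q : ℕ) (hq : q = 2^k) {F : Type*} [Field F] [Fintype F] [DecidableEq F] (hF : Fintype.card F = q^4) (c : F) (hc : (c + c^q + c^(q^2) + c^(q^3)) = 1) :
    (∑ i ∈ Finset.range k, ((1+c+c^(q^2))^(q+1))^(2^i)) = 1 := by
  -- characteristic 2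
  haveI hp : CharP F (ringChar F) := ringChar.charP F
  obtain ⟨n, hprime, hcard⟩ := FiniteField.card F (ringChar F)
  have hchar2 : ringChar F = 2 := by
    have hdvd : ringChar F ∣ (2:ℕ) ^ (k * 4) := by
      rw [pow_mul, ← hq, ← hF, hcard]
      exact dvd_pow_self _ (by positivity)
    exact (Nat.prime_dvd_prime_iff_eq hprime Nat.prime_two).mp
      (hprime.dvd_of_dvd_pow hdvd)
  haveI h2 : CharP F 2 := hchar2 ▸ hp
  haveI : Fact (Nat.Prime 2) := ⟨Nat.prime_two⟩
  have frob : ∀ x y : F, (x + y) ^ q = x ^ q + y ^ q := by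
    intro x y; rw [hq]; exact add_pow_char_pow ..
  set t : F := c + c ^ (q ^ 2) with ht
  have htq : t ^ q = 1 + t := by
    have h1 : (c ^ (q ^ 2)) ^ q = c ^ (q ^ 3) := by
      rw [← pow_mul]; ring_nf
    have hsum : t + t ^ q = 1 := by
      rw [ht, frob, h1, ← hc]; ring
    linear_combination hsum - CharTwo.add_self_eq_zero t
  have hx : (1 + c + c ^ (q ^ 2)) ^ (q + 1) = t + t ^ 2 := by
    have h1t : (1 : F) + c + c ^ (q ^ 2) = 1 + t := by rw [ht]; ring
    have hfq : ((1 : F) + t) ^ q = t := by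
      rw [frob, one_pow, htq]
      linear_combination CharTwo.add_self_eq_zero (1 : F)
    rw [h1t, pow_succ, hfq]; ring
  rw [hx]
  have hterm : ∀ i, ((t + t ^ 2)) ^ (2 ^ i) = t ^ (2 ^ (i + 1)) - t ^ (2 ^ i) := by
    intro i
    have : (t + t ^ 2) ^ (2 ^ i) = t ^ (2 ^ i) + (t ^ 2) ^ (2 ^ i) :=
      add_pow_char_pow ..
    rw [this, ← pow_mul, CharTwo.sub_eq_add]
    rw [pow_succ']; ring
  calc ∑ i ∈ Finset.range k, (t + t ^ 2) ^ (2 ^ i)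
      = ∑ i ∈ Finset.range k, (t ^ (2 ^ (i + 1)) - t ^ (2 ^ i)) := by
        exact Finset.sum_congr rfl fun i _ => hterm i
    _ = t ^ (2 ^ k) - t ^ (2 ^ 0) := Finset.sum_range_sub (fun i => t ^ (2 ^ i)) k
    _ = 1 := by rw [← hq, htq]; ring
end

section
/- For every b in GF(q⁴), the equation X^{q²+q+1} + (X+1)^{q²+q+1} = b has 0, 2, or 4 solutions in GF(q⁴). -/
open Finset

set_option maxHeartbeats 4000000 in
theorem stmt18 (k : ℕ) (hk : 0 < k) (q : ℕ) (hq : q = 2^k) {F : Type*} [Field F] [Fintype F] [DecidableEq F] (hF : Fintype.card F = q^4) (b : F) :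
    (Finset.univ.filter (fun x : F => (x^(q^2+q+1) + (x+1)^(q^2+q+1)) = b)).card = 0 ∨ (Finset.univ.filter (fun x : F => (x^(q^2+q+1) + (x+1)^(q^2+q+1)) = b)).card = 2 ∨ (Finset.univ.filter (fun x : F => (x^(q^2+q+1) + (x+1)^(q^2+q+1)) = b)).card = 4 := by
  classical
  haveI hrc : CharP F (ringChar F) := ringChar.charP F
  obtain ⟨n, hpn, hcard⟩ := FiniteField.card F (ringChar F)
  have hp2 : ringChar F = 2 := by
    have hdvd : ringChar F ∣ 2 ^ (k*4) := by
      have h1 : Fintype.card F = 2 ^ (k*4) := by rw [hF, hq, ← pow_mul]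
      rw [← h1, hcard]
      exact dvd_pow_self (ringChar F) n.pos.ne'
    exact (Nat.prime_dvd_prime_iff_eq hpn Nat.prime_two).mp (hpn.dvd_of_dvd_pow hdvd)
  haveI hC2 : CharP F 2 := hp2 ▸ hrc
  haveI : Fact (Nat.Prime 2) := ⟨Nat.prime_two⟩
  have htwo : (2 : F) = 0 := by exact_mod_cast CharP.cast_eq_zero F 2
  have frob : ∀ a c : F, (a + c)^q = a^q + c^q := by
    intro a c; rw [hq]; exact add_pow_char_pow a c 2 k
  have frob1 : ∀ a : F, (a + 1)^q = a^q + 1 := by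
    intro a; rw [frob a 1, one_pow]
  have pow4 : ∀ a : F, (((a^q)^q)^q)^q = a := by
    intro a
    rw [← pow_mul, ← pow_mul, ← pow_mul, show q*(q*(q*q)) = q^4 by ring, ← hF]
    exact FiniteField.pow_card a
  have hAq : (b + b^q + (b^q)^q + ((b^q)^q)^q + 1)^q = b + b^q + (b^q)^q + ((b^q)^q)^q + 1 := by
    rw [frob1, frob, frob, frob, pow4 b]; ring
  set S := Finset.univ.filter (fun x : F => (x^(q^2+q+1) + (x+1)^(q^2+q+1)) = b) with hS
  have hsplit : ∀ w : F, w^(q^2+q+1) = (w^q)^q * w^q * w := by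
    intro w
    rw [pow_add, pow_add, pow_one, pow_two, pow_mul]
  have heq : ∀ w : F, w ∈ S → (w^q)^q * w^q * w + ((w^q)^q+1)*(w^q+1)*(w+1) = b := by
    intro w hw
    rw [hS, Finset.mem_filter] at hw
    have h := hw.2
    rw [hsplit w, hsplit (w+1), frob1 w, frob1 (w^q)] at h
    exact h
  have hstep : ∀ a c d r : F, a*c*d + (a+1)*(c+1)*(d+1) = r →
      a^q*c^q*d^q + (a^q+1)*(c^q+1)*(d^q+1) = r^q := by
    intro a c d r h
    have h2 : (a*c*d + (a+1)*(c+1)*(d+1))^q = r^q := by rw [h]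
    rw [frob, mul_pow, mul_pow, mul_pow, mul_pow, frob1, frob1, frob1] at h2
    exact h2
  have hplus : ∀ w : F, w ∈ S → w + 1 ∈ S := by
    intro w hw
    rw [hS, Finset.mem_filter] at hw ⊢
    refine ⟨Finset.mem_univ _, ?_⟩
    have h11 : w + 1 + 1 = w := by linear_combination htwo
    rw [h11]
    linear_combination hw.2
  have hne1 : ∀ w : F, w ≠ w + 1 := by
    intro w h
    exact one_ne_zero (α := F) (by linear_combination -h)
  rcases Finset.eq_empty_or_nonempty S with hemp | ⟨x, hxS⟩
  · left; rw [hemp]; exact Finset.card_empty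
  · have hx1S : x + 1 ∈ S := hplus x hxS
    have hx0 := heq x hxS
    have hx1 := hstep ((x^q)^q) (x^q) x b hx0
    have hx2 := hstep (((x^q)^q)^q) ((x^q)^q) (x^q) (b^q) hx1
    rw [pow4 x] at hx2
    have hx3 := hstep x (((x^q)^q)^q) ((x^q)^q) ((b^q)^q) hx2
    rw [pow4 x] at hx3
    have key : ∀ y : F, y ∈ S → y ≠ x → y ≠ x + 1 → (x+y)*((x+y)+1) + (b + b^q + (b^q)^q + ((b^q)^q)^q + 1)*(x^q + ((x^q)^q)^q + (b + b^q + (b^q)^q + ((b^q)^q)^q + 1)) = 0 := by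
      intro y hyS hyx hyx1
      have hy0 := heq y hyS
      have hy1 := hstep ((y^q)^q) (y^q) y b hy0
      have hy2 := hstep (((y^q)^q)^q) ((y^q)^q) (y^q) (b^q) hy1
      rw [pow4 y] at hy2
      have hy3 := hstep y (((y^q)^q)^q) ((y^q)^q) ((b^q)^q) hy2
      rw [pow4 y] at hy3
      have hzd1 : (x+y)^q = x^q + y^q := frob x y
      have hzd2 : ((x+y)^q)^q = (x^q)^q + (y^q)^q := by rw [hzd1, frob]
      have hzd3 : (((x+y)^q)^q)^q = ((x^q)^q)^q + ((y^q)^q)^q := by rw [hzd2, frob]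
      have G0 : (x)*(x^q) + (x)*((x^q)^q) + 2*(x)*((x+y)^q) + 2*(x)*(((x+y)^q)^q) + (x) + (x^q)*(y) + (x^q)*(((x+y)^q)^q) + ((x^q)^q)*(y) + ((x^q)^q)*((x+y)^q) + (y)*((x+y)^q) + (y)*(((x+y)^q)^q) + (y) + ((x+y)^q)*(((x+y)^q)^q) + ((x+y)^q) + (((x+y)^q)^q) = 0 := by
        linear_combination (1) * hy0 + (-1) * hx0 + (2*(y)*((y^q)^q) + (y) + ((y^q)^q) + 1) * hzd1 + (-2*(x^q)*(y) - (x^q) + 2*(y)*((x+y)^q) + (y) + ((x+y)^q) + 1) * hzd2 + ((x)*(x^q)*((x^q)^q) + (x)*(x^q) + (x)*((x^q)^q) + (x)*((x+y)^q) + (x)*(((x+y)^q)^q) + (x) - (x^q)*((x^q)^q)*(y) + (x^q)*(y)*(((x+y)^q)^q) + (x^q)*(y) + (x^q)*(((x+y)^q)^q) + (x^q) + ((x^q)^q)*(y)*((x+y)^q) + ((x^q)^q)*(y) + ((x^q)^q)*((x+y)^q) + ((x^q)^q) - (y)*((x+y)^q)*(((x+y)^q)^q)) * htwo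
      have G1 : (x^q)*(((x+y)^q)^q) + (x^q)*((((x+y)^q)^q)^q) + ((x^q)^q)*((x+y)^q) + ((x^q)^q)*((((x+y)^q)^q)^q) + (((x^q)^q)^q)*((x+y)^q) + (((x^q)^q)^q)*(((x+y)^q)^q) + ((x+y)^q)*(((x+y)^q)^q) + ((x+y)^q)*((((x+y)^q)^q)^q) + ((x+y)^q) + (((x+y)^q)^q)*((((x+y)^q)^q)^q) + (((x+y)^q)^q) + ((((x+y)^q)^q)^q) = 0 := by
        linear_combination (1) * hy1 + (-1) * hx1 + (2*((y^q)^q)*(((y^q)^q)^q) + ((y^q)^q) + (((y^q)^q)^q) + 1) * hzd1 + (-2*(x^q)*(((y^q)^q)^q) - (x^q) + 2*(((y^q)^q)^q)*((x+y)^q) + (((y^q)^q)^q) + ((x+y)^q) + 1) * hzd2 + (2*(x^q)*((x^q)^q) - 2*(x^q)*(((x+y)^q)^q) - (x^q) - 2*((x^q)^q)*((x+y)^q) - ((x^q)^q) + 2*((x+y)^q)*(((x+y)^q)^q) + ((x+y)^q) + (((x+y)^q)^q) + 1) * hzd3 + (2*(x^q)*((x^q)^q)*(((x^q)^q)^q)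 - (x^q)*((x^q)^q)*((((x+y)^q)^q)^q) - (x^q)*(((x^q)^q)^q)*(((x+y)^q)^q) + (x^q)*(((x+y)^q)^q)*((((x+y)^q)^q)^q) + (x^q)*(((x+y)^q)^q) + (x^q)*((((x+y)^q)^q)^q) + (x^q) - ((x^q)^q)*(((x^q)^q)^q)*((x+y)^q) + ((x^q)^q)*((x+y)^q)*((((x+y)^q)^q)^q) + ((x^q)^q)*((x+y)^q) + ((x^q)^q)*((((x+y)^q)^q)^q) + ((x^q)^q) + (((x^q)^q)^q)*((x+y)^q)*(((x+y)^q)^q) + (((x^q)^q)^q)*((x+y)^q) + (((x^q)^q)^q)*(((x+y)^q)^q) + (((x^q)^q)^q) - ((x+y)^q)*(((x+y)^q)^q)*((((x+y)^q)^q)^q)) * htwo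
      have G2 : (x)*((x^q)^q) + (x)*(((x^q)^q)^q) + 2*(x)*(((x+y)^q)^q) + 2*(x)*((((x+y)^q)^q)^q) + (x) + ((x^q)^q)*(y) + ((x^q)^q)*((((x+y)^q)^q)^q) + (((x^q)^q)^q)*(y) + (((x^q)^q)^q)*(((x+y)^q)^q) + (y)*(((x+y)^q)^q) + (y)*((((x+y)^q)^q)^q) + (y) + (((x+y)^q)^q)*((((x+y)^q)^q)^q) + (((x+y)^q)^q) + ((((x+y)^q)^q)^q) = 0 := by
        linear_combination (1) * hy2 + (-1) * hx2 + (2*(y)*(((y^q)^q)^q) + (y) + (((y^q)^q)^q) + 1) * hzd2 + (-2*((x^q)^q)*(y) - ((x^q)^q) + 2*(y)*(((x+y)^q)^q) + (y) + (((x+y)^q)^q) + 1) * hzd3 + ((x)*((x^q)^q)*(((x^q)^q)^q) + (x)*((x^q)^q) + (x)*(((x^q)^q)^q) + (x)*(((x+y)^q)^q) + (x)*((((x+y)^q)^q)^q) + (x) - ((x^q)^q)*(((x^q)^q)^q)*(y) + ((x^q)^q)*(y)*((((x+y)^q)^q)^q) + ((x^q)^q)*(y) + ((x^q)^q)*((((x+y)^q)^q)^q)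 + ((x^q)^q) + (((x^q)^q)^q)*(y)*(((x+y)^q)^q) + (((x^q)^q)^q)*(y) + (((x^q)^q)^q)*(((x+y)^q)^q) + (((x^q)^q)^q) - (y)*(((x+y)^q)^q)*((((x+y)^q)^q)^q)) * htwo
      have G3 : (x)*(x^q) + (x)*(((x^q)^q)^q) + 2*(x)*((x+y)^q) + 2*(x)*((((x+y)^q)^q)^q) + (x) + (x^q)*(y) + (x^q)*((((x+y)^q)^q)^q) + (((x^q)^q)^q)*(y) + (((x^q)^q)^q)*((x+y)^q) + (y)*((x+y)^q) + (y)*((((x+y)^q)^q)^q) + (y) + ((x+y)^q)*((((x+y)^q)^q)^q) + ((x+y)^q) + ((((x+y)^q)^q)^q) = 0 := by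
        linear_combination (1) * hy3 + (-1) * hx3 + (2*(y)*(((y^q)^q)^q) + (y) + (((y^q)^q)^q) + 1) * hzd1 + (-2*(x^q)*(y) - (x^q) + 2*(y)*((x+y)^q) + (y) + ((x+y)^q) + 1) * hzd3 + ((x)*(x^q)*(((x^q)^q)^q) + (x)*(x^q) + (x)*(((x^q)^q)^q) + (x)*((x+y)^q) + (x)*((((x+y)^q)^q)^q) + (x) - (x^q)*(((x^q)^q)^q)*(y) + (x^q)*(y)*((((x+y)^q)^q)^q) + (x^q)*(y) + (x^q)*((((x+y)^q)^q)^q) + (x^q) + (((x^q)^q)^q)*(y)*((x+y)^q) + (((x^q)^q)^q)*(y) + (((x^q)^q)^q)*((x+y)^q) + (((x^q)^q)^q) - (y)*((x+y)^q)*((((x+y)^q)^q)^q)) * htwo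
      have e1 : (x + y + (x+y)^q) * (x + y + (x+y)^q + (b + b^q + (b^q)^q + ((b^q)^q)^q + 1)) = 0 := by
        linear_combination (1) * G1 + (1) * G2 + (2*(x) + (x^q) + (y) + ((x+y)^q)) * G0 + (2*(x) + (x^q) + (y) + ((x+y)^q)) * G1 + (2*(x) + (x^q) + (y) + ((x+y)^q)) * G2 + (2*(x) + (x^q) + (y) + ((x+y)^q)) * G3 + (-(x) - (y) - ((x+y)^q)) * hx0 + (-(x) - (y) - ((x+y)^q)) * hx1 + (-(x) - (y) - ((x+y)^q)) * hx2 + (-(x) - (y) - ((x+y)^q)) * hx3 + ((x)^2*(x^q)*((x^q)^q) + (x)^2*(x^q)*(((x^q)^q)^q) - (x)^2*(x^q) + (x)^2*((x^q)^q)*(((x^q)^q)^q) - (x)^2*((x^q)^q) - (x)^2*(((x^q)^q)^q) - 4*(x)^2*((x+y)^q) - 4*(x)^2*(((x+y)^q)^q) - 4*(x)^2*((((x+y)^q)^q)^q) - (x)^2 - (x)*(x^q)^2 + (x)*(x^q)*((x^q)^q)*(((x^q)^q)^q) + (x)*(x^q)*((x^q)^q)*(y) + (x)*(x^q)*((x^q)^q)*((x+y)^q)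 + (x)*(x^q)*(((x^q)^q)^q)*(y) + (x)*(x^q)*(((x^q)^q)^q)*((x+y)^q) - 2*(x)*(x^q)*(y) - 2*(x)*(x^q)*((x+y)^q) - 4*(x)*(x^q)*(((x+y)^q)^q) - 4*(x)*(x^q)*((((x+y)^q)^q)^q) + (x)*((x^q)^q)*(((x^q)^q)^q)*(y) + (x)*((x^q)^q)*(((x^q)^q)^q)*((x+y)^q) + (x)*((x^q)^q)*(((x^q)^q)^q) - 2*(x)*((x^q)^q)*(y) - 2*(x)*((x^q)^q)*((x+y)^q) - 2*(x)*((x^q)^q)*((((x+y)^q)^q)^q) + (x)*((x^q)^q) - 2*(x)*(((x^q)^q)^q)*(y) - 2*(x)*(((x^q)^q)^q)*((x+y)^q) - 2*(x)*(((x^q)^q)^q)*(((x+y)^q)^q) + (x)*(((x^q)^q)^q) - 4*(x)*(y)*((x+y)^q) - 4*(x)*(y)*(((x+y)^q)^q) - 4*(x)*(y)*((((x+y)^q)^q)^q) - 2*(x)*(y) - 2*(x)*((x+y)^q)^2 - 4*(x)*((x+y)^q)*(((x+y)^q)^q) - 4*(x)*((x+y)^q)*((((x+y)^q)^q)^q)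 - 2*(x)*((x+y)^q) - 2*(x)*(((x+y)^q)^q)*((((x+y)^q)^q)^q) - 4*(x)*(((x+y)^q)^q) - 4*(x)*((((x+y)^q)^q)^q) + 2*(x) - (x^q)^2*(y) - (x^q)^2*(((x+y)^q)^q) - (x^q)^2*((((x+y)^q)^q)^q) + (x^q)*((x^q)^q)*(((x^q)^q)^q)*(y) + (x^q)*((x^q)^q)*(((x^q)^q)^q)*((x+y)^q) - (x^q)*((x^q)^q)*((((x+y)^q)^q)^q) - (x^q)*(((x^q)^q)^q)*(((x+y)^q)^q) - (x^q)*(y)^2 - 2*(x^q)*(y)*((x+y)^q) - 2*(x^q)*(y)*(((x+y)^q)^q) - 2*(x^q)*(y)*((((x+y)^q)^q)^q) - 2*(x^q)*((x+y)^q)*(((x+y)^q)^q) - 2*(x^q)*((x+y)^q)*((((x+y)^q)^q)^q) - (x^q)*(((x+y)^q)^q)*((((x+y)^q)^q)^q) - 2*(x^q)*(((x+y)^q)^q) - 2*(x^q)*((((x+y)^q)^q)^q) + ((x^q)^q)*(((x^q)^q)^q)*(y) + ((x^q)^q)*(((x^q)^q)^q)*((x+y)^q) - ((x^q)^q)*(y)^2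 - 2*((x^q)^q)*(y)*((x+y)^q) - ((x^q)^q)*(y)*((((x+y)^q)^q)^q) + ((x^q)^q)*(y) - ((x^q)^q)*((x+y)^q)^2 - ((x^q)^q)*((x+y)^q)*((((x+y)^q)^q)^q) + ((x^q)^q)*((x+y)^q) - ((x^q)^q)*((((x+y)^q)^q)^q) - (((x^q)^q)^q)*(y)^2 - 2*(((x^q)^q)^q)*(y)*((x+y)^q) - (((x^q)^q)^q)*(y)*(((x+y)^q)^q) + (((x^q)^q)^q)*(y) - (((x^q)^q)^q)*((x+y)^q)^2 - (((x^q)^q)^q)*((x+y)^q)*(((x+y)^q)^q) + (((x^q)^q)^q)*((x+y)^q) - (((x^q)^q)^q)*(((x+y)^q)^q) - (y)^2*((x+y)^q) - (y)^2*(((x+y)^q)^q) - (y)^2*((((x+y)^q)^q)^q) - (y)^2 - (y)*((x+y)^q)^2 - 2*(y)*((x+y)^q)*(((x+y)^q)^q) - 2*(y)*((x+y)^q)*((((x+y)^q)^q)^q) - 2*(y)*((x+y)^q) - (y)*(((x+y)^q)^q)*((((x+y)^q)^q)^q) - 2*(y)*(((x+y)^q)^q) - 2*(y)*((((x+y)^q)^q)^q)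 + 2*(y) - ((x+y)^q)^2*(((x+y)^q)^q) - ((x+y)^q)^2*((((x+y)^q)^q)^q) - ((x+y)^q)^2 - ((x+y)^q)*(((x+y)^q)^q)*((((x+y)^q)^q)^q) - 2*((x+y)^q)*(((x+y)^q)^q) - 2*((x+y)^q)*((((x+y)^q)^q)^q) + 2*((x+y)^q) - (((x+y)^q)^q)*((((x+y)^q)^q)^q) - (((x+y)^q)^q) - ((((x+y)^q)^q)^q)) * htwo
      rcases mul_eq_zero.mp e1 with hbr | hbr
      · have hz1e : (x+y)^q = x + y := by linear_combination hbr - (x+y)*htwo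
        have hz20 : ((x+y)^q)^q = x + y := by rw [hz1e, hz1e]
        have hz31 : (((x+y)^q)^q)^q = (x+y)^q := by rw [hz20]
        have F1 : (x+y)*((x+y)+1) = 0 := by
          linear_combination (1) * G1 + (-(x^q) - ((x^q)^q) - ((x+y)^q) - (((x+y)^q)^q) - 1) * hz31 + (-(x^q) - (((x^q)^q)^q) - 2*((x+y)^q) - 1) * hz20 + (-(x) - (x^q) - 2*((x^q)^q) - (((x^q)^q)^q) - (y) - ((x+y)^q) - 2*1) * hbr + ((x)^2 + (x)*((x^q)^q) + 2*(x)*(y) + (x) + ((x^q)^q)*(y) + (y)^2 + (y)) * htwo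
        rcases mul_eq_zero.mp F1 with h | h
        · exact absurd (by linear_combination h - x*htwo : y = x) hyx
        · exact absurd (by linear_combination h - (x+1)*htwo : y = x+1) hyx1
      · have hz1e : (x+y)^q = x + y + (b + b^q + (b^q)^q + ((b^q)^q)^q + 1) := by linear_combination hbr - (x+y+(b + b^q + (b^q)^q + ((b^q)^q)^q + 1))*htwo
        have hz20 : ((x+y)^q)^q = x + y := by
          rw [hz1e, frob, hz1e, hAq]; linear_combination (b + b^q + (b^q)^q + ((b^q)^q)^q + 1)*htwo
        have hz31 : (((x+y)^q)^q)^q = (x+y)^q := by rw [hz20]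
        linear_combination (1) * G1 + (-(x^q) - ((x^q)^q) - ((x+y)^q) - (((x+y)^q)^q) - 1) * hz31 + (-(x^q) - (((x^q)^q)^q) - 2*((x+y)^q) - 1) * hz20 + (-(x) - (x^q) - 2*((x^q)^q) - (((x^q)^q)^q) - (y) - ((x+y)^q) + (b) + (b^q) + ((b^q)^q) + (((b^q)^q)^q) - 1) * hbr + ((x)^2 + (x)*((x^q)^q) + 2*(x)*(y) + (x) + (x^q)*(b) + (x^q)*(b^q) + (x^q)*((b^q)^q) + (x^q)*(((b^q)^q)^q) + (x^q) + ((x^q)^q)*(y) + ((x^q)^q)*(b) + ((x^q)^q)*(b^q) + ((x^q)^q)*((b^q)^q) + ((x^q)^q)*(((b^q)^q)^q) + ((x^q)^q) + (((x^q)^q)^q)*(b) + (((x^q)^q)^q)*(b^q) + (((x^q)^q)^q)*((b^q)^q) + (((x^q)^q)^q)*(((b^q)^q)^q) + (((x^q)^q)^q) + (y)^2 + (y) + (b) + (b^q) + ((b^q)^q) + (((b^q)^q)^q) + 1) * htwo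
    by_cases hex : ∃ y ∈ S, y ≠ x ∧ y ≠ x + 1
    · obtain ⟨y, hyS, hyx, hyx1⟩ := hex
      have hy1S : y + 1 ∈ S := hplus y hyS
      have Ky := key y hyS hyx hyx1
      have n2 : x ≠ y := Ne.symm hyx
      have n3 : x ≠ y + 1 := by
        intro h; exact hyx1 (by linear_combination -h - htwo)
      have n4 : x + 1 ≠ y := fun h => hyx1 h.symm
      have n5 : x + 1 ≠ y + 1 := by
        intro h; exact hyx (by linear_combination -h)
      have hSeq : S = {x, x+1, y, y+1} := by
        apply Finset.Subset.antisymm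
        · intro w hwS
          simp only [Finset.mem_insert, Finset.mem_singleton]
          by_cases h1 : w = x
          · exact Or.inl h1
          by_cases h2 : w = x + 1
          · exact Or.inr (Or.inl h2)
          have Kw := key w hwS h1 h2
          have hcomb : (y + w) * ((y + w) + 1) = 0 := by
            linear_combination Ky - Kw + (y*w + w^2 - x*y + x*w + w) * htwo
          rcases mul_eq_zero.mp hcomb with h | h
          · exact Or.inr (Or.inr (Or.inl (by linear_combination h - y*htwo)))
          · exact Or.inr (Or.inr (Or.inr (by linear_combination h - (y+1)*htwo)))
        · intro w hw
          simp only [Finset.mem_insert, Finset.mem_singleton] at hw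
          rcases hw with h | h | h | h <;> subst h
          · exact hxS
          · exact hx1S
          · exact hyS
          · exact hy1S
      right; right
      rw [hSeq]
      rw [Finset.card_insert_of_notMem (by simp [hne1 x, n2, n3]),
          Finset.card_insert_of_notMem (by simp [n4, n5]),
          Finset.card_pair (hne1 y)]
    · push_neg at hex
      have hSeq : S = {x, x+1} := by
        apply Finset.Subset.antisymm
        · intro w hwS
          simp only [Finset.mem_insert, Finset.mem_singleton]
          by_cases h1 : w = x
          · exact Or.inl h1
          · exact Or.inr (hex w hwS h1)
        · intro w hw
          simp only [Finset.mem_insert, Finset.mem_singleton] at hw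
          rcases hw with h | h <;> subst h
          · exact hxS
          · exact hx1S
      right; left
      rw [hSeq]
      exact Finset.card_pair (hne1 x)
end
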